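/- arXiv:2310.05527 — 5 statements merged into one kernel-verified Lean document; each statement's English description precedes it below -/
import Mathlib

section
/- (Foster's theorem) Let G be a simple connected undirected weighted graph on N vertices. Then the sum over all pairs of adjacent vertices of the edge weight times the resistance distance satisfies Σ_{i∼j} w_{ij} · r_{ij} = N − 1, where the sum runs over all edges {i,j} of G. -/
open Matrix BigOperators

/-- The Laplacian matrix `L = S - A` of a weighted graph given by its weight
function `w`, where `S` is the diagonal matrix of vertex strengths. -/
noncomputable def lapW {V : Type*} [Fintype V] [DecidableEq V] (w : V → V → ℝ) :
    Matrix V V ℝ :=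
  Matrix.diagonal (fun i => ∑ k, w i k) - Matrix.of w

/-- The all-ones matrix `J`. -/
def JMat (V : Type*) : Matrix V V ℝ := Matrix.of fun _ _ => (1 : ℝ)

/-- The pseudoinverse `L† = (L + (1/N)·J)⁻¹ - (1/N)·J` of the Laplacian. -/
noncomputable def lapDagW {V : Type*} [Fintype V] [DecidableEq V] (w : V → V → ℝ) :
    Matrix V V ℝ :=
  (lapW w + ((Fintype.card V : ℝ))⁻¹ • JMat V)⁻¹ - ((Fintype.card V : ℝ))⁻¹ • JMat V

/-- The resistance distance `r_{ij} = L†_{ii} + L†_{jj} - 2 L†_{ij}`. -/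
noncomputable def resDistW {V : Type*} [Fintype V] [DecidableEq V] (w : V → V → ℝ)
    (i j : V) : ℝ :=
  lapDagW w i i + lapDagW w j j - 2 * lapDagW w i j

/-- Connectivity of the weighted graph: any two vertices are joined by a chain of
positive-weight edges. -/
def ConnW {V : Type*} (w : V → V → ℝ) : Prop :=
  ∀ i j : V, Relation.ReflTransGen (fun a b => 0 < w a b) i j

section
variable {V : Type*} [Fintype V] [DecidableEq V]

lemma lap_row (w : V → V → ℝ) (x : V → ℝ) (i : V) :
    (lapW w).mulVec x i = (∑ k, w i k) * x i - ∑ j, w i j * x j := by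
  simp [lapW, mulVec, dotProduct, sub_mul, Finset.sum_sub_distrib, diagonal_apply,
    ite_mul, Finset.sum_ite_eq, Finset.mem_univ]

lemma quad (w : V → V → ℝ) (hsymm : ∀ i j, w i j = w j i) (x : V → ℝ) :
    2 * (x ⬝ᵥ (lapW w).mulVec x) = ∑ i, ∑ j, w i j * (x i - x j) ^ 2 := by
  have key : x ⬝ᵥ (lapW w).mulVec x
      = (∑ i, ∑ j, w i j * x i ^ 2) - ∑ i, ∑ j, w i j * (x i * x j) := by
    rw [← Finset.sum_sub_distrib]
    refine Finset.sum_congr rfl fun i _ => ?_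
    rw [← Finset.sum_sub_distrib]
    show x i * (lapW w).mulVec x i = _
    rw [lap_row]
    have h1 : x i * ((∑ k, w i k) * x i) = ∑ k, w i k * x i ^ 2 := by
      rw [Finset.sum_mul, Finset.mul_sum]
      exact Finset.sum_congr rfl fun k _ => by ring
    have h2 : x i * ∑ j, w i j * x j = ∑ j, w i j * (x i * x j) := by
      rw [Finset.mul_sum]
      exact Finset.sum_congr rfl fun k _ => by ring
    rw [mul_sub, h1, h2, Finset.sum_sub_distrib]
  have swap1 : (∑ i, ∑ j, w i j * x j ^ 2) = ∑ i, ∑ j, w i j * x i ^ 2 := by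
    rw [Finset.sum_comm]
    exact Finset.sum_congr rfl fun j _ => Finset.sum_congr rfl fun i _ => by rw [hsymm]
  calc 2 * (x ⬝ᵥ (lapW w).mulVec x)
      = (∑ i, ∑ j, w i j * x i ^ 2) + (∑ i, ∑ j, w i j * x j ^ 2)
        - 2 * ∑ i, ∑ j, w i j * (x i * x j) := by rw [key, swap1]; ring
    _ = ∑ i, ∑ j, w i j * (x i - x j) ^ 2 := by
        rw [Finset.mul_sum]
        simp_rw [Finset.mul_sum, ← Finset.sum_add_distrib, ← Finset.sum_sub_distrib]
        exact Finset.sum_congr rfl fun i _ => Finset.sum_congr rfl fun j _ => by ring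
end

section
variable {V : Type*} [Fintype V] [DecidableEq V]

lemma Munit (w : V → V → ℝ) (hsymm : ∀ i j, w i j = w j i) (hnonneg : ∀ i j, 0 ≤ w i j)
    (hconn : ∀ i j : V, Relation.ReflTransGen (fun a b => 0 < w a b) i j)
    (hpos : 0 < (Fintype.card V : ℝ)) :
    IsUnit (lapW w + ((Fintype.card V : ℝ))⁻¹ • JMat V) := by
  set c : ℝ := ((Fintype.card V : ℝ))⁻¹ with hc
  have hcpos : 0 < c := inv_pos.mpr hpos
  rw [← Matrix.mulVec_injective_iff_isUnit]
  have hker : ∀ x : V → ℝ, (lapW w + c • JMat V).mulVec x = 0 → x = 0 := by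
    intro x hx
    have hJq : x ⬝ᵥ (JMat V).mulVec x = (∑ j, x j) ^ 2 := by
      simp [JMat, mulVec, dotProduct, sq, Finset.sum_mul]
    have hq : x ⬝ᵥ (lapW w).mulVec x + c * (∑ j, x j) ^ 2 = 0 := by
      have h := congrArg (fun v => x ⬝ᵥ v) hx
      simp only [Matrix.add_mulVec, Matrix.smul_mulVec, dotProduct_add,
        dotProduct_smul, smul_eq_mul, dotProduct_zero] at h
      rw [hJq] at h
      exact h
    have hLx : 0 ≤ x ⬝ᵥ (lapW w).mulVec x := by
      have h2 : 0 ≤ 2 * (x ⬝ᵥ (lapW w).mulVec x) := by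
        rw [quad w hsymm x]
        exact Finset.sum_nonneg fun i _ => Finset.sum_nonneg fun j _ =>
          mul_nonneg (hnonneg i j) (sq_nonneg _)
      linarith
    have hT : 0 ≤ c * (∑ j, x j) ^ 2 := mul_nonneg hcpos.le (sq_nonneg _)
    have hL0 : x ⬝ᵥ (lapW w).mulVec x = 0 := by linarith
    have hsum0 : (∑ j, x j) = 0 := by
      have : c * (∑ j, x j) ^ 2 = 0 := by linarith
      have h2 := (mul_eq_zero.mp this).resolve_left (ne_of_gt hcpos)
      exact sq_eq_zero_iff.mp h2
    have hsumsq : ∑ i, ∑ j, w i j * (x i - x j) ^ 2 = 0 := by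
      rw [← quad w hsymm x, hL0, mul_zero]
    have hterm : ∀ i j, 0 < w i j → x i = x j := by
      intro i j hw
      have hnn : ∀ i ∈ Finset.univ, (0:ℝ) ≤ ∑ j, w i j * (x i - x j) ^ 2 := fun i _ =>
        Finset.sum_nonneg fun j _ => mul_nonneg (hnonneg i j) (sq_nonneg _)
      have hi := (Finset.sum_eq_zero_iff_of_nonneg hnn).mp hsumsq i (Finset.mem_univ i)
      have hnn2 : ∀ j ∈ Finset.univ, (0:ℝ) ≤ w i j * (x i - x j) ^ 2 := fun j _ =>
        mul_nonneg (hnonneg i j) (sq_nonneg _)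
      have hij := (Finset.sum_eq_zero_iff_of_nonneg hnn2).mp hi j (Finset.mem_univ j)
      have := (mul_eq_zero.mp hij).resolve_left (ne_of_gt hw)
      have := sq_eq_zero_iff.mp this
      linarith
    have hall : ∀ a b : V, Relation.ReflTransGen (fun a b => 0 < w a b) a b → x a = x b := by
      intro a b h
      induction h with
      | refl => rfl
      | tail _ hbc ih => exact ih.trans (hterm _ _ hbc)
    have hne : Nonempty V := Fintype.card_pos_iff.mp (Nat.cast_pos.mp hpos)
    obtain ⟨i0⟩ := hne
    have hx0 : ∀ j, x j = x i0 := fun j => (hall i0 j (hconn i0 j)).symm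
    have hcard : (Fintype.card V : ℝ) * x i0 = 0 := by
      rw [← hsum0]
      simp [hx0, Finset.sum_congr rfl fun j _ => hx0 j, Finset.sum_const, nsmul_eq_mul]
    have hxi0 : x i0 = 0 := by
      rcases mul_eq_zero.mp hcard with h | h
      · exact absurd h (ne_of_gt hpos)
      · exact h
    funext j
    rw [hx0 j, hxi0]; rfl
  intro a b hab
  have : (lapW w + c • JMat V).mulVec (a - b) = 0 := by
    rw [Matrix.mulVec_sub, hab, sub_self]
  have := hker _ this
  funext i
  have := congrFun this i
  simpa [sub_eq_zero] using this
end

section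
variable {V : Type*} [Fintype V] [DecidableEq V]

lemma LJ_zero (w : V → V → ℝ) : lapW w * JMat V = 0 := by
  ext i j
  simp [mul_apply, lapW, JMat, sub_mul, Finset.sum_sub_distrib, diagonal_apply,
    ite_mul, Finset.sum_ite_eq, Finset.mem_univ]

lemma JL_zero (w : V → V → ℝ) (hsymm : ∀ i j, w i j = w j i) : JMat V * lapW w = 0 := by
  ext i j
  simp only [mul_apply, lapW, JMat, of_apply, Matrix.sub_apply, one_mul, diagonal_apply,
    Finset.sum_sub_distrib, Matrix.zero_apply]
  rw [Finset.sum_ite_eq' Finset.univ j (fun i => ∑ k, w i k)]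
  simp only [Finset.mem_univ, if_true]
  rw [sub_eq_zero]
  exact Finset.sum_congr rfl fun k _ => hsymm j k

lemma JJ_eq : JMat V * JMat V = (Fintype.card V : ℝ) • JMat V := by
  ext i j
  simp [mul_apply, JMat, Finset.sum_const, Finset.card_univ]

lemma fac (w : V → V → ℝ) (hsymm : ∀ i j, w i j = w j i)
    (h0 : (Fintype.card V : ℝ) ≠ 0) :
    (1 - ((Fintype.card V : ℝ))⁻¹ • JMat V) *
      (lapW w + ((Fintype.card V : ℝ))⁻¹ • JMat V) = lapW w := by
  set c : ℝ := ((Fintype.card V : ℝ))⁻¹ with hc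
  have hcN : c * (Fintype.card V : ℝ) = 1 := inv_mul_cancel₀ h0
  rw [sub_mul, one_mul, Matrix.smul_mul, mul_add, JL_zero w hsymm, Matrix.mul_smul, JJ_eq]
  rw [smul_add, smul_zero, zero_add, smul_smul, smul_smul, mul_comm c, mul_assoc, hcN, mul_one]
  abel

lemma LD_eq (w : V → V → ℝ) (hsymm : ∀ i j, w i j = w j i) (hnonneg : ∀ i j, 0 ≤ w i j)
    (hconn : ∀ i j : V, Relation.ReflTransGen (fun a b => 0 < w a b) i j)
    (hpos : 0 < (Fintype.card V : ℝ)) :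
    lapW w * lapDagW w = 1 - ((Fintype.card V : ℝ))⁻¹ • JMat V := by
  set c : ℝ := ((Fintype.card V : ℝ))⁻¹ with hc
  set M := lapW w + c • JMat V with hM
  have hMunit : IsUnit M := Munit w hsymm hnonneg hconn hpos
  have hMM : M * M⁻¹ = 1 := Matrix.mul_nonsing_inv M ((Matrix.isUnit_iff_isUnit_det M).mp hMunit)
  have hLMinv : lapW w * M⁻¹ = 1 - c • JMat V := by
    have := fac w hsymm (ne_of_gt hpos)
    rw [← hM] at this
    calc lapW w * M⁻¹ = ((1 - c • JMat V) * M) * M⁻¹ := by rw [this]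
      _ = (1 - c • JMat V) * (M * M⁻¹) := by rw [Matrix.mul_assoc]
      _ = 1 - c • JMat V := by rw [hMM, Matrix.mul_one]
  have : lapDagW w = M⁻¹ - c • JMat V := rfl
  rw [this, Matrix.mul_sub, hLMinv, Matrix.mul_smul, LJ_zero, smul_zero, sub_zero]

lemma trace_LD (w : V → V → ℝ) (hsymm : ∀ i j, w i j = w j i) (hnonneg : ∀ i j, 0 ≤ w i j)
    (hconn : ∀ i j : V, Relation.ReflTransGen (fun a b => 0 < w a b) i j)
    (hpos : 0 < (Fintype.card V : ℝ)) :
    Matrix.trace (lapW w * lapDagW w) = (Fintype.card V : ℝ) - 1 := by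
  rw [LD_eq w hsymm hnonneg hconn hpos, Matrix.trace_sub, Matrix.trace_one, Matrix.trace_smul]
  have hJtr : Matrix.trace (JMat V) = (Fintype.card V : ℝ) := by
    simp [Matrix.trace, Matrix.diag, JMat, Finset.card_univ]
  rw [hJtr, smul_eq_mul, inv_mul_cancel₀ (ne_of_gt hpos)]

end


/-- **Foster's theorem.** For a simple connected weighted graph on `N` vertices,
the sum over all pairs of adjacent vertices of edge weight times resistance
distance equals `N - 1`.  Since `w` is symmetric and vanishes on non-edges and on
the diagonal, this sum over edges is half of the full double sum. -/
theorem stmt_1 {V : Type*} [Fintype V] [DecidableEq V]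
    (hN : 2 ≤ Fintype.card V) (w : V → V → ℝ)
    (hsymm : ∀ i j, w i j = w j i) (hnonneg : ∀ i j, 0 ≤ w i j)
    (hdiag : ∀ i, w i i = 0) (hconn : ConnW w) :
    (∑ i : V, ∑ j : V, w i j * resDistW w i j) / 2 = (Fintype.card V : ℝ) - 1 := by
  have hpos : 0 < (Fintype.card V : ℝ) := by
    have : 0 < Fintype.card V := lt_of_lt_of_le (by norm_num) hN
    exact_mod_cast this
  set D := lapDagW w with hD
  have hres : ∀ i j, resDistW w i j = D i i + D j j - 2 * D i j := fun i j => rfl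
  have htr : Matrix.trace (lapW w * D)
      = (∑ i, (∑ k, w i k) * D i i) - ∑ i, ∑ k, w i k * D k i := by
    rw [Matrix.trace, ← Finset.sum_sub_distrib]
    refine Finset.sum_congr rfl fun i _ => ?_
    simp only [Matrix.diag_apply, Matrix.mul_apply, lapW, Matrix.sub_apply,
      Matrix.diagonal_apply, Matrix.of_apply, ite_mul, zero_mul, sub_mul]
    rw [Finset.sum_ite_eq Finset.univ i]
    simp
  have hA : ∑ i, ∑ j, w i j * D i i = ∑ i, (∑ k, w i k) * D i i :=
    Finset.sum_congr rfl fun i _ => by rw [← Finset.sum_mul]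
  have hB : ∑ i, ∑ j, w i j * D j j = ∑ i, (∑ k, w i k) * D i i := by
    rw [Finset.sum_comm]
    refine Finset.sum_congr rfl fun j _ => ?_
    rw [← Finset.sum_mul]
    congr 1
    exact Finset.sum_congr rfl fun i _ => hsymm i j
  have hC : ∑ i, ∑ j, w i j * D i j = ∑ i, ∑ j, w i j * D j i := by
    rw [Finset.sum_comm]
    exact Finset.sum_congr rfl fun j _ => Finset.sum_congr rfl fun i _ => by rw [hsymm]
  have expand : ∑ i, ∑ j, w i j * resDistW w i j
      = (∑ i, ∑ j, w i j * D i i) + (∑ i, ∑ j, w i j * D j j)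
        - 2 * ∑ i, ∑ j, w i j * D i j := by
    rw [Finset.mul_sum]
    simp_rw [Finset.mul_sum, ← Finset.sum_add_distrib, ← Finset.sum_sub_distrib]
    exact Finset.sum_congr rfl fun i _ => Finset.sum_congr rfl fun j _ => by
      rw [hres]; ring
  have key : ∑ i, ∑ j, w i j * resDistW w i j = 2 * Matrix.trace (lapW w * D) := by
    rw [expand, hA, hB, hC, htr]; ring
  rw [key, trace_LD w hsymm hnonneg hconn hpos]
  ring
end

section
/- Let G be a connected undirected weighted graph on N vertices (N ≥ 2) with maximum edge weight w_max, Laplacian L, and pseudoinverse L†. Then for every vertex u, L†_{uu} = e_uᵀ L† e_u ≥ (N−1)²/(N³·w_max). -/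
/-!
Put `M = L + J/N`. For a connected graph `M` is positive definite and fixes the constant vector
`𝟙`, so `L†_{uu} = yᵀ M⁻¹ y` for the centred vector `y = e_u - 𝟙/N`. For any positive definite
`M`, expanding `0 ≤ zᵀ M⁻¹ z` at `z = y - t M y` gives `yᵀ M⁻¹ y ≥ 2t yᵀy - t² yᵀ M y`.
Here `yᵀy = 1 - 1/N` and `yᵀ M y = e_uᵀ L e_u ≤ (N - 1) w_max`, and `t = 1/(N w_max)` yields
`L†_{uu} ≥ (N - 1)/(N² w_max) ≥ (N - 1)²/(N³ w_max)`.
-/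

open Matrix BigOperators

section QuadraticForm

variable {n : Type*} [Fintype n]

lemma Matrix.dotProduct_mulVec_comm_of_transpose_eq {A : Matrix n n ℝ} (hA : Aᵀ = A)
    (v x : n → ℝ) : v ⬝ᵥ (A *ᵥ x) = (A *ᵥ v) ⬝ᵥ x := by
  rw [dotProduct_mulVec, ← mulVec_transpose, hA]

theorem Matrix.PosDef.two_mul_sub_le_dotProduct_inv_mulVec [DecidableEq n] {M : Matrix n n ℝ}
    (hM : M.PosDef) (y : n → ℝ) (t : ℝ) :
    2 * t * (y ⬝ᵥ y) - t ^ 2 * (y ⬝ᵥ (M *ᵥ y)) ≤ y ⬝ᵥ (M⁻¹ *ᵥ y) := by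
  have hMt : Mᵀ = M := by
    simpa [conjTranspose_eq_transpose_of_trivial] using hM.isHermitian.eq
  have hunit : IsUnit M.det := (isUnit_iff_isUnit_det M).mp hM.isUnit
  have hinv : M⁻¹ *ᵥ (M *ᵥ y) = y := by
    rw [mulVec_mulVec, nonsing_inv_mul _ hunit, one_mulVec]
  have hcross : (M *ᵥ y) ⬝ᵥ (M⁻¹ *ᵥ y) = y ⬝ᵥ y := by
    rw [← dotProduct_mulVec_comm_of_transpose_eq hMt, mulVec_mulVec, mul_nonsing_inv _ hunit,
      one_mulVec]
  have hz := hM.inv.posSemidef.dotProduct_mulVec_nonneg (y - t • (M *ᵥ y))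
  rw [star_trivial, mulVec_sub, mulVec_smul, hinv] at hz
  simp only [sub_dotProduct, dotProduct_sub, smul_dotProduct, dotProduct_smul, smul_eq_mul,
    hcross, dotProduct_comm (M *ᵥ y) y] at hz
  linarith

end QuadraticForm

section Connectivity

variable {V : Type*} {w : V → V → ℝ}

lemma ConnW.eq_of_forall_pos (hconn : ConnW w) {x : V → ℝ}
    (h : ∀ i j, 0 < w i j → x i = x j) (i j : V) : x i = x j := by
  induction hconn i j with
  | refl => rfl
  | tail _ hbc ih => exact ih.trans (h _ _ hbc)

lemma ConnW.pos_of_forall_le [Nontrivial V] (hconn : ConnW w) {wmax : ℝ}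
    (hub : ∀ i j, w i j ≤ wmax) : 0 < wmax := by
  obtain ⟨i, j, hij⟩ := exists_pair_ne V
  obtain hij' | ⟨k, hik, -⟩ := (hconn i j).cases_head
  · exact absurd hij' hij
  · exact hik.trans_le (hub i k)

end Connectivity

section Laplacian

variable {V : Type*} [Fintype V] [DecidableEq V] {w : V → V → ℝ}

lemma lapW_mulVec (w : V → V → ℝ) (x : V → ℝ) (i : V) :
    (lapW w *ᵥ x) i = ∑ j, w i j * (x i - x j) := by
  simp only [lapW, sub_mulVec, Pi.sub_apply, mulVec_diagonal]
  simp [mulVec, dotProduct, mul_sub, Finset.sum_sub_distrib, Finset.sum_mul]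

lemma lapW_mulVec_one (w : V → V → ℝ) : lapW w *ᵥ 1 = 0 := by
  ext i
  simp [lapW_mulVec]

lemma lapW_transpose (hsymm : ∀ i j, w i j = w j i) : (lapW w)ᵀ = lapW w := by
  ext i j
  rcases eq_or_ne i j with rfl | h
  · simp [lapW]
  · simp [lapW, h, h.symm, hsymm j i]

lemma two_mul_dotProduct_lapW_mulVec (hsymm : ∀ i j, w i j = w j i) (x : V → ℝ) :
    2 * (x ⬝ᵥ (lapW w *ᵥ x)) = ∑ i, ∑ j, w i j * (x i - x j) ^ 2 := by
  have hswap : x ⬝ᵥ (lapW w *ᵥ x) = ∑ i, ∑ j, -x j * (w i j * (x i - x j)) := by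
    simp only [dotProduct, lapW_mulVec, Finset.mul_sum]
    rw [Finset.sum_comm]
    refine Finset.sum_congr rfl fun i _ => Finset.sum_congr rfl fun j _ => ?_
    rw [hsymm]
    ring
  calc 2 * (x ⬝ᵥ (lapW w *ᵥ x))
      = ∑ i, ∑ j, x i * (w i j * (x i - x j)) + ∑ i, ∑ j, -x j * (w i j * (x i - x j)) := by
        rw [← hswap, two_mul]
        simp only [dotProduct, lapW_mulVec, Finset.mul_sum]
    _ = ∑ i, ∑ j, w i j * (x i - x j) ^ 2 := by
        simp only [← Finset.sum_add_distrib]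
        exact Finset.sum_congr rfl fun i _ => Finset.sum_congr rfl fun j _ => by ring

lemma dotProduct_lapW_mulVec_nonneg (hsymm : ∀ i j, w i j = w j i)
    (hnonneg : ∀ i j, 0 ≤ w i j) (x : V → ℝ) : 0 ≤ x ⬝ᵥ (lapW w *ᵥ x) := by
  have := two_mul_dotProduct_lapW_mulVec hsymm x
  have : 0 ≤ ∑ i, ∑ j, w i j * (x i - x j) ^ 2 :=
    Finset.sum_nonneg fun i _ => Finset.sum_nonneg fun j _ =>
      mul_nonneg (hnonneg i j) (sq_nonneg _)
  linarith

lemma eq_of_dotProduct_lapW_mulVec_eq_zero (hsymm : ∀ i j, w i j = w j i)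
    (hnonneg : ∀ i j, 0 ≤ w i j) {x : V → ℝ} (hx : x ⬝ᵥ (lapW w *ᵥ x) = 0) {i j : V}
    (hij : 0 < w i j) : x i = x j := by
  have hterm : ∀ i j, 0 ≤ w i j * (x i - x j) ^ 2 := fun i j =>
    mul_nonneg (hnonneg i j) (sq_nonneg _)
  have hsum : ∑ i, ∑ j, w i j * (x i - x j) ^ 2 = 0 := by
    rw [← two_mul_dotProduct_lapW_mulVec hsymm, hx, mul_zero]
  rw [Finset.sum_eq_zero_iff_of_nonneg fun i _ => Finset.sum_nonneg fun j _ => hterm i j]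
    at hsum
  have hij0 := (Finset.sum_eq_zero_iff_of_nonneg fun j _ => hterm i j).mp
    (hsum i (Finset.mem_univ _)) j (Finset.mem_univ _)
  rw [mul_eq_zero, pow_eq_zero_iff two_ne_zero, sub_eq_zero] at hij0
  exact hij0.resolve_left hij.ne'

lemma single_dotProduct_lapW_mulVec_single (w : V → V → ℝ) (u : V) :
    Pi.single u 1 ⬝ᵥ (lapW w *ᵥ Pi.single u 1) = ∑ j ∈ Finset.univ.erase u, w u j := by
  rw [single_dotProduct, one_mul, lapW_mulVec, ← Finset.add_sum_erase _ _ (Finset.mem_univ u),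
    sub_self, mul_zero, zero_add]
  refine Finset.sum_congr rfl fun j hj => ?_
  simp [Finset.ne_of_mem_erase hj]

lemma single_dotProduct_lapW_mulVec_single_le {wmax : ℝ} (hub : ∀ i j, w i j ≤ wmax) (u : V) :
    Pi.single u 1 ⬝ᵥ (lapW w *ᵥ Pi.single u 1) ≤ ((Fintype.card V : ℝ) - 1) * wmax := by
  have hcard : ((Finset.univ.erase u).card : ℝ) = (Fintype.card V : ℝ) - 1 := by
    rw [Finset.card_erase_of_mem (Finset.mem_univ u), Finset.card_univ,
      Nat.cast_pred (Fintype.card_pos_iff.mpr ⟨u⟩)]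
  rw [single_dotProduct_lapW_mulVec_single, ← hcard, ← nsmul_eq_mul]
  exact Finset.sum_le_card_nsmul _ _ _ fun j _ => hub u j

end Laplacian

lemma JMat_transpose (V : Type*) : (JMat V)ᵀ = JMat V := by
  ext i j
  rfl

lemma JMat_mulVec {V : Type*} [Fintype V] (v : V → ℝ) : JMat V *ᵥ v = (∑ i, v i) • 1 := by
  ext i
  simp [JMat, mulVec, dotProduct]

section Regularized

variable {V : Type*} [Fintype V] [DecidableEq V] {w : V → V → ℝ}

theorem posDef_lapW_add_smul_JMat (hsymm : ∀ i j, w i j = w j i)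
    (hnonneg : ∀ i j, 0 ≤ w i j) (hconn : ConnW w) {c : ℝ} (hc : 0 < c) :
    (lapW w + c • JMat V).PosDef := by
  refine posDef_iff_dotProduct_mulVec.mpr ⟨?_, fun x hx => ?_⟩
  · rw [IsHermitian, conjTranspose_eq_transpose_of_trivial, transpose_add, transpose_smul,
      lapW_transpose hsymm, JMat_transpose]
  rw [star_trivial, add_mulVec, dotProduct_add, smul_mulVec, JMat_mulVec, dotProduct_smul,
    dotProduct_smul, dotProduct_one, smul_eq_mul, smul_eq_mul]
  have hL := dotProduct_lapW_mulVec_nonneg hsymm hnonneg x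
  by_contra! hle
  have hsq : (∑ i, x i) * (∑ i, x i) = 0 := by
    nlinarith [mul_self_nonneg (∑ i, x i)]
  have hLx : x ⬝ᵥ (lapW w *ᵥ x) = 0 := by
    nlinarith
  obtain ⟨a, ha⟩ := Function.ne_iff.mp hx
  have : Nonempty V := ⟨a⟩
  have hconst : ∀ i, x i = x a := fun i =>
    hconn.eq_of_forall_pos (fun _ _ => eq_of_dotProduct_lapW_mulVec_eq_zero hsymm hnonneg hLx) i a
  have hcard : (Fintype.card V : ℝ) ≠ 0 := Nat.cast_ne_zero.mpr Fintype.card_ne_zero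
  simp only [hconst, Finset.sum_const, Finset.card_univ, nsmul_eq_mul, mul_self_eq_zero,
    mul_eq_zero, hcard, false_or] at hsq
  exact ha hsq

noncomputable def lapRegW (w : V → V → ℝ) : Matrix V V ℝ :=
  lapW w + (Fintype.card V : ℝ)⁻¹ • JMat V

noncomputable def centeredSingle (u : V) : V → ℝ :=
  Pi.single u 1 - (Fintype.card V : ℝ)⁻¹ • 1

theorem posDef_lapRegW [Nonempty V] (hsymm : ∀ i j, w i j = w j i)
    (hnonneg : ∀ i j, 0 ≤ w i j) (hconn : ConnW w) : (lapRegW w).PosDef :=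
  posDef_lapW_add_smul_JMat hsymm hnonneg hconn (by positivity)

lemma lapRegW_mulVec_one [Nonempty V] (w : V → V → ℝ) : lapRegW w *ᵥ 1 = 1 := by
  rw [lapRegW, add_mulVec, lapW_mulVec_one, zero_add, smul_mulVec, JMat_mulVec]
  simp [smul_smul]

lemma lapRegW_mulVec_centeredSingle (w : V → V → ℝ) (u : V) :
    lapRegW w *ᵥ centeredSingle u = lapW w *ᵥ Pi.single u 1 := by
  have : Nonempty V := ⟨u⟩
  rw [centeredSingle, mulVec_sub, mulVec_smul, lapRegW_mulVec_one, lapRegW, add_mulVec,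
    smul_mulVec, JMat_mulVec, Finset.sum_pi_single', if_pos (Finset.mem_univ u), one_smul,
    add_sub_cancel_right]

lemma centeredSingle_dotProduct_self (u : V) :
    centeredSingle u ⬝ᵥ centeredSingle u = 1 - (Fintype.card V : ℝ)⁻¹ := by
  have : Nonempty V := ⟨u⟩
  simp only [centeredSingle, sub_dotProduct, dotProduct_sub, smul_dotProduct, dotProduct_smul,
    one_dotProduct_one, single_dotProduct, dotProduct_single, Pi.sub_apply, Pi.smul_apply,
    Pi.single_eq_same, Pi.one_apply, smul_eq_mul]
  field_simp
  ring

lemma centeredSingle_dotProduct_lapRegW_mulVec (hsymm : ∀ i j, w i j = w j i) (u : V) :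
    centeredSingle u ⬝ᵥ (lapRegW w *ᵥ centeredSingle u) =
      Pi.single u 1 ⬝ᵥ (lapW w *ᵥ Pi.single u 1) := by
  rw [lapRegW_mulVec_centeredSingle, centeredSingle, sub_dotProduct, smul_dotProduct,
    dotProduct_mulVec_comm_of_transpose_eq (lapW_transpose hsymm) 1, lapW_mulVec_one,
    zero_dotProduct, smul_zero, sub_zero]

theorem lapDagW_apply_self (hsymm : ∀ i j, w i j = w j i) (hnonneg : ∀ i j, 0 ≤ w i j)
    (hconn : ConnW w) (u : V) :
    lapDagW w u u = centeredSingle u ⬝ᵥ ((lapRegW w)⁻¹ *ᵥ centeredSingle u) := by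
  have : Nonempty V := ⟨u⟩
  have hM := posDef_lapRegW hsymm hnonneg hconn
  have hinv_one : (lapRegW w)⁻¹ *ᵥ 1 = 1 := by
    conv_lhs => rw [← lapRegW_mulVec_one w]
    rw [mulVec_mulVec, nonsing_inv_mul _ ((isUnit_iff_isUnit_det _).mp hM.isUnit), one_mulVec]
  have hinvT : ((lapRegW w)⁻¹)ᵀ = (lapRegW w)⁻¹ := by
    simpa [conjTranspose_eq_transpose_of_trivial] using hM.inv.isHermitian.eq
  have hone : 1 ⬝ᵥ ((lapRegW w)⁻¹ *ᵥ Pi.single u 1) = 1 := by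
    rw [dotProduct_mulVec_comm_of_transpose_eq hinvT, hinv_one, dotProduct_comm,
      single_dotProduct, Pi.one_apply, mul_one]
  have hdiag : Pi.single u 1 ⬝ᵥ ((lapRegW w)⁻¹ *ᵥ Pi.single u 1) = (lapRegW w)⁻¹ u u := by
    rw [single_dotProduct, mulVec_single, one_mul]
    simp
  have hdag : lapDagW w u u = (lapRegW w)⁻¹ u u - (Fintype.card V : ℝ)⁻¹ := by
    change ((lapRegW w)⁻¹ - _ • JMat V) u u = _
    simp [JMat]
  rw [hdag, centeredSingle, mulVec_sub, mulVec_smul, hinv_one]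
  simp only [sub_dotProduct, dotProduct_sub, smul_dotProduct, dotProduct_smul, hone, hdiag,
    one_dotProduct_one, single_dotProduct, Pi.one_apply, smul_eq_mul]
  field_simp
  ring

end Regularized

theorem stmt_7_general {V : Type*} [Fintype V] [DecidableEq V]
    (hN : 2 ≤ Fintype.card V) (w : V → V → ℝ)
    (hsymm : ∀ i j, w i j = w j i) (hnonneg : ∀ i j, 0 ≤ w i j)
    (hconn : ConnW w)
    (wmax : ℝ) (hub : ∀ i j, w i j ≤ wmax)
    (u : V) :
    lapDagW w u u = Pi.single u (1 : ℝ) ⬝ᵥ (lapDagW w *ᵥ Pi.single u (1 : ℝ)) ∧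
    ((Fintype.card V : ℝ) - 1) ^ 2 / ((Fintype.card V : ℝ) ^ 3 * wmax) ≤
      lapDagW w u u := by
  refine ⟨by simp [mulVec_single], ?_⟩
  have : Nontrivial V := Fintype.one_lt_card_iff_nontrivial.mp hN
  have hw : 0 < wmax := hconn.pos_of_forall_le hub
  have hn : (2 : ℝ) ≤ Fintype.card V := by exact_mod_cast hN
  have key := (posDef_lapRegW hsymm hnonneg hconn).two_mul_sub_le_dotProduct_inv_mulVec
    (centeredSingle u) ((Fintype.card V * wmax)⁻¹)
  rw [← lapDagW_apply_self hsymm hnonneg hconn, centeredSingle_dotProduct_self,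
    centeredSingle_dotProduct_lapRegW_mulVec hsymm] at key
  set n : ℝ := (Fintype.card V : ℝ)
  calc (n - 1) ^ 2 / (n ^ 3 * wmax) ≤ (n - 1) / (n ^ 2 * wmax) := by
        rw [div_le_div_iff₀ (by positivity) (by positivity)]
        nlinarith [mul_pos (mul_pos (by linarith : (0:ℝ) < n - 1) (by positivity : 0 < n ^ 2)) hw]
    _ = 2 * (n * wmax)⁻¹ * (1 - n⁻¹) - (n * wmax)⁻¹ ^ 2 * ((n - 1) * wmax) := by
        field_simp
        ring
    _ ≤ 2 * (n * wmax)⁻¹ * (1 - n⁻¹) -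
          (n * wmax)⁻¹ ^ 2 * (Pi.single u 1 ⬝ᵥ (lapW w *ᵥ Pi.single u 1)) := by
        gcongr
        exact single_dotProduct_lapW_mulVec_single_le hub u
    _ ≤ lapDagW w u u := key

/-- For a connected weighted graph on `N ≥ 2` vertices with maximum edge weight
`w_max`, for every vertex `u`, `L†_{uu} = e_uᵀ L† e_u ≥ (N-1)²/(N³·w_max)`. -/
theorem stmt_7 {V : Type*} [Fintype V] [DecidableEq V]
    (hN : 2 ≤ Fintype.card V) (w : V → V → ℝ)
    (hsymm : ∀ i j, w i j = w j i) (hnonneg : ∀ i j, 0 ≤ w i j)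
    (hdiag : ∀ i, w i i = 0) (hconn : ConnW w)
    (wmax : ℝ) (hub : ∀ i j, w i j ≤ wmax) (hex : ∃ i j, i ≠ j ∧ w i j = wmax)
    (u : V) :
    lapDagW w u u = Pi.single u (1 : ℝ) ⬝ᵥ (lapDagW w *ᵥ Pi.single u (1 : ℝ)) ∧
    ((Fintype.card V : ℝ) - 1) ^ 2 / ((Fintype.card V : ℝ) ^ 3 * wmax) ≤
      lapDagW w u u :=
  stmt_7_general hN w hsymm hnonneg hconn wmax hub u
end

section
/- Let G be a connected undirected weighted graph on N vertices with M edges and signed incidence matrix B ∈ R^{M×N}. Let Z and Z̃ be k×N real matrices satisfying Z·1 = Z̃·1 = 0, where 1 is the all-ones vector. Then for every vertex u, | ‖Z e_u‖ − ‖Z̃ e_u‖ | ≤ √N · ‖(Z − Z̃) Bᵀ‖_F, where ‖·‖_F denotes the Frobenius norm. -/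
open Matrix BigOperators

/-- The signed incidence matrix `B ∈ ℝ^{E×V}` of a graph whose edge `e` is oriented
from `tail e` to `head e`: the row of `e` is `e_{tail e}ᵀ - e_{head e}ᵀ`. -/
def incMat {V E : Type*} [DecidableEq V] (tail head : E → V) : Matrix E V ℝ :=
  Matrix.of fun e v => (if v = tail e then (1 : ℝ) else 0) - (if v = head e then 1 else 0)

/-- The Laplacian `L = Bᵀ W B`, where `W` is the diagonal matrix of edge weights. -/
noncomputable def lapInc {V E : Type*} [Fintype V] [Fintype E] [DecidableEq V] [DecidableEq E]
    (tail head : E → V) (we : E → ℝ) : Matrix V V ℝ :=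
  (incMat tail head)ᵀ * Matrix.diagonal we * incMat tail head

/-- The pseudoinverse `L† = (L + (1/N)·J)⁻¹ - (1/N)·J` of the Laplacian. -/
noncomputable def lapDagInc {V E : Type*} [Fintype V] [Fintype E] [DecidableEq V] [DecidableEq E]
    (tail head : E → V) (we : E → ℝ) : Matrix V V ℝ :=
  (lapInc tail head we + ((Fintype.card V : ℝ))⁻¹ • JMat V)⁻¹ -
    ((Fintype.card V : ℝ))⁻¹ • JMat V

/-- Connectivity: any two vertices are joined by a chain of edges. -/
def ConnInc {V E : Type*} (tail head : E → V) : Prop :=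
  ∀ a b : V, Relation.ReflTransGen
    (fun x y => ∃ e, (tail e = x ∧ head e = y) ∨ (tail e = y ∧ head e = x)) a b

/-!
Write `D = Z - Z̃`. The left side is at most `‖D e_u‖` by the reverse triangle inequality, so it
suffices to bound each row `d` of `D`, a function on the vertices with `∑ v, d v = 0`, at `u`.
Zero sum gives a vertex `v` with `d v` of sign opposite to `d u`, so `|d u| ≤ |d u - d v|`.
Telescoping `d u - d v` along a path from `u` to `v`, which has at most `N - 1` distinct edges,
Cauchy–Schwarz gives `(d u - d v)² ≤ (N - 1) ∑ₑ (d (tail e) - d (head e))²`, and the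
`e`-th entry of `d Bᵀ` is exactly `d (tail e) - d (head e)`.
-/

theorem List.sq_sum_le_length_mul_sum_sq {ι : Type*} (l : List ι) (f : ι → ℝ) :
    (l.map f).sum ^ 2 ≤ l.length * (l.map fun x => f x ^ 2).sum := by
  have := sq_sum_le_card_mul_sum_sq (s := Finset.univ) (f := fun i : Fin l.length => f l[i.1])
  rwa [Fin.sum_univ_fun_getElem, Fin.sum_univ_fun_getElem l (f · ^ 2), Finset.card_univ,
    Fintype.card_fin] at this

theorem List.sum_map_le_sum_comp {α ι : Type*} [DecidableEq α] [Fintype ι] {l : List α}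
    (hl : l.Nodup) (f : ι → α) (hf : ∀ x ∈ l, x ∈ Set.range f) (g : α → ℝ) (hg : ∀ x, 0 ≤ g x) :
    (l.map g).sum ≤ ∑ i, g (f i) :=
  calc (l.map g).sum = ∑ x ∈ l.toFinset, g x := (List.sum_toFinset g hl).symm
    _ ≤ ∑ x ∈ Finset.univ.image f, g x :=
        Finset.sum_le_sum_of_subset_of_nonneg (fun x hx => by simpa using hf x (by simpa using hx))
          fun x _ _ => hg x
    _ ≤ ∑ i, g (f i) := Finset.sum_image_le_of_nonneg fun x _ => hg x

theorem abs_sqrt_sum_sq_sub_le {ι : Type*} [Fintype ι] (a b : ι → ℝ) :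
    |√(∑ i, a i ^ 2) - √(∑ i, b i ^ 2)| ≤ √(∑ i, (a i - b i) ^ 2) := by
  simpa [EuclideanSpace.norm_eq] using
    abs_norm_sub_norm_le (WithLp.toLp 2 a : EuclideanSpace ℝ ι) (WithLp.toLp 2 b)

theorem exists_sq_le_sq_sub_of_sum_eq_zero {ι : Type*} [Fintype ι] (d : ι → ℝ)
    (hd : ∑ i, d i = 0) (u : ι) : ∃ v, d u ^ 2 ≤ (d u - d v) ^ 2 := by
  have hne : (Finset.univ : Finset ι).Nonempty := ⟨u, Finset.mem_univ u⟩
  rcases le_total 0 (d u) with hu | hu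
  · obtain ⟨v, -, hv⟩ := Finset.exists_le_of_sum_le hne (f := d) (g := fun _ => 0) (by simp [hd])
    exact ⟨v, by nlinarith [hv]⟩
  · obtain ⟨v, -, hv⟩ := Finset.exists_le_of_sum_le hne (f := fun _ => 0) (g := d) (by simp [hd])
    exact ⟨v, by nlinarith [hv]⟩

def sqDiff {V : Type*} (d : V → ℝ) : Sym2 V → ℝ :=
  Sym2.lift ⟨fun x y => (d x - d y) ^ 2, fun x y => by ring⟩

@[simp]
theorem sqDiff_mk {V : Type*} (d : V → ℝ) (x y : V) : sqDiff d s(x, y) = (d x - d y) ^ 2 := rfl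

theorem sqDiff_nonneg {V : Type*} (d : V → ℝ) (s : Sym2 V) : 0 ≤ sqDiff d s := by
  induction s using Sym2.ind with
  | _ x y => exact sq_nonneg _

namespace SimpleGraph.Walk

variable {V : Type*} {G : SimpleGraph V}

theorem sub_eq_sum_darts {R : Type*} [AddCommGroup R] (d : V → R) {a b : V} (p : G.Walk a b) :
    d a - d b = (p.darts.map fun t => d t.fst - d t.snd).sum := by
  induction p with
  | nil => simp
  | cons _ p ih => simp [← ih]

theorem sq_sub_le_length_mul_sum_sqDiff (d : V → ℝ) {a b : V} (p : G.Walk a b) :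
    (d a - d b) ^ 2 ≤ p.length * (p.edges.map (sqDiff d)).sum := by
  rw [p.sub_eq_sum_darts d, ← p.length_darts]
  simpa [Walk.edges, Function.comp_def, Dart.edge] using
    List.sq_sum_le_length_mul_sum_sq p.darts fun t => d t.fst - d t.snd

end SimpleGraph.Walk

section Incidence

variable {V E : Type*} (tail head : E → V)

def incGraph : SimpleGraph V :=
  SimpleGraph.fromRel fun x y => ∃ e, tail e = x ∧ head e = y

variable {tail head}

theorem ConnInc.reachable (hconn : ConnInc tail head) (a b : V) :
    (incGraph tail head).Reachable a b := by
  rw [SimpleGraph.reachable_iff_reflTransGen, ← Relation.reflTransGen_reflGen]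
  refine Relation.ReflTransGen.mono (fun x y hxy => ?_) a b (hconn a b)
  obtain ⟨e, he⟩ := hxy
  by_cases hxy : x = y
  · exact hxy ▸ Relation.ReflGen.refl
  · exact Relation.ReflGen.single ⟨hxy, he.imp (⟨e, ·⟩) (⟨e, ·⟩)⟩

theorem mem_range_of_mem_edgeSet_incGraph {s : Sym2 V} (hs : s ∈ (incGraph tail head).edgeSet) :
    s ∈ Set.range fun e => s(tail e, head e) := by
  induction s using Sym2.ind with
  | _ x y =>
    obtain ⟨-, ⟨e, rfl, rfl⟩ | ⟨e, rfl, rfl⟩⟩ := hs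
    · exact ⟨e, rfl⟩
    · exact ⟨e, Sym2.eq_swap⟩

variable [Fintype V] [Fintype E]

theorem ConnInc.sq_sub_le (hconn : ConnInc tail head) (d : V → ℝ) (a b : V) :
    (d a - d b) ^ 2 ≤ (Fintype.card V - 1 : ℝ) * ∑ e, (d (tail e) - d (head e)) ^ 2 := by
  classical
  obtain ⟨p, hp⟩ := (hconn.reachable a b).exists_isPath
  have hlen : (p.length : ℝ) ≤ Fintype.card V - 1 := by
    rw [le_sub_iff_add_le]
    exact_mod_cast hp.length_lt
  have hsum : (p.edges.map (sqDiff d)).sum ≤ ∑ e, (d (tail e) - d (head e)) ^ 2 :=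
    List.sum_map_le_sum_comp hp.isTrail.edges_nodup _
      (fun _ hs => mem_range_of_mem_edgeSet_incGraph (p.edges_subset_edgeSet hs)) _
      (sqDiff_nonneg d)
  calc (d a - d b) ^ 2 ≤ p.length * (p.edges.map (sqDiff d)).sum :=
        p.sq_sub_le_length_mul_sum_sqDiff d
    _ ≤ _ := mul_le_mul hlen hsum (List.sum_nonneg (by simpa using fun s _ => sqDiff_nonneg d s))
        (p.length.cast_nonneg.trans hlen)

theorem ConnInc.sq_le_of_sum_eq_zero (hconn : ConnInc tail head) (d : V → ℝ)
    (hd : ∑ v, d v = 0) (u : V) :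
    d u ^ 2 ≤ (Fintype.card V - 1 : ℝ) * ∑ e, (d (tail e) - d (head e)) ^ 2 := by
  obtain ⟨v, hv⟩ := exists_sq_le_sq_sub_of_sum_eq_zero d hd u
  exact hv.trans (hconn.sq_sub_le d u v)

end Incidence

theorem mul_incMat_transpose_apply {ι V E : Type*} [Fintype V] [DecidableEq V]
    (tail head : E → V) (A : Matrix ι V ℝ) (i : ι) (e : E) :
    (A * (incMat tail head)ᵀ) i e = A i (tail e) - A i (head e) := by
  simp [Matrix.mul_apply, incMat, mul_sub, Finset.sum_sub_distrib]

theorem Matrix.sum_apply_eq_zero_of_mulVec_one {ι V : Type*} [Fintype V] {A : Matrix ι V ℝ}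
    (hA : A *ᵥ (fun _ => (1 : ℝ)) = 0) (i : ι) : ∑ v, A i v = 0 := by
  simpa [Matrix.mulVec, dotProduct] using congrFun hA i

theorem stmt_8_general {V E : Type*} [Fintype V] [DecidableEq V] [Fintype E]
    (tail head : E → V)
    (hconn : ConnInc tail head)
    (k : ℕ) (Z Zt : Matrix (Fin k) V ℝ)
    (hZ : Z *ᵥ (fun _ => (1 : ℝ)) = 0) (hZt : Zt *ᵥ (fun _ => (1 : ℝ)) = 0)
    (u : V) :
    |Real.sqrt (∑ i, Z i u ^ 2) - Real.sqrt (∑ i, Zt i u ^ 2)| ≤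
      Real.sqrt (Fintype.card V) *
        Real.sqrt (∑ i, ∑ e, ((Z - Zt) * (incMat tail head)ᵀ) i e ^ 2) := by
  have hrow (i : Fin k) : ∑ v, (Z - Zt) i v = 0 := by
    simp [Finset.sum_sub_distrib, sum_apply_eq_zero_of_mulVec_one hZ,
      sum_apply_eq_zero_of_mulVec_one hZt]
  have hentry (i : Fin k) : (Z - Zt) i u ^ 2 ≤
      Fintype.card V * ∑ e, ((Z - Zt) * (incMat tail head)ᵀ) i e ^ 2 := by
    simp only [mul_incMat_transpose_apply]
    refine (hconn.sq_le_of_sum_eq_zero _ (hrow i) u).trans ?_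
    gcongr
    exact sub_le_self _ zero_le_one
  calc _ ≤ √(∑ i, (Z - Zt) i u ^ 2) := abs_sqrt_sum_sq_sub_le (Z · u) (Zt · u)
    _ ≤ √(Fintype.card V * ∑ i, ∑ e, ((Z - Zt) * (incMat tail head)ᵀ) i e ^ 2) := by
        rw [Finset.mul_sum]
        exact Real.sqrt_le_sqrt (Finset.sum_le_sum fun i _ => hentry i)
    _ = _ := Real.sqrt_mul (Nat.cast_nonneg _) _

/-- For `k×N` matrices `Z`, `Z̃` with `Z·1 = Z̃·1 = 0`, and every vertex `u`,
`| ‖Z e_u‖ - ‖Z̃ e_u‖ | ≤ √N · ‖(Z - Z̃) Bᵀ‖_F`. -/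
theorem stmt_8 {V E : Type*} [Fintype V] [DecidableEq V] [Fintype E] [DecidableEq E]
    (hN : 2 ≤ Fintype.card V)
    (tail head : E → V) (we : E → ℝ)
    (hth : ∀ e, tail e ≠ head e) (hpos : ∀ e, 0 < we e)
    (hconn : ConnInc tail head)
    (k : ℕ) (Z Zt : Matrix (Fin k) V ℝ)
    (hZ : Z *ᵥ (fun _ => (1 : ℝ)) = 0) (hZt : Zt *ᵥ (fun _ => (1 : ℝ)) = 0)
    (u : V) :
    |Real.sqrt (∑ i, Z i u ^ 2) - Real.sqrt (∑ i, Zt i u ^ 2)| ≤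
      Real.sqrt (Fintype.card V) *
        Real.sqrt (∑ i, ∑ e, ((Z - Zt) * (incMat tail head)ᵀ) i e ^ 2) :=
  stmt_8_general tail head hconn k Z Zt hZ hZt u
end

section
/- In the Koch network K_g, let x be a node with label {0, i_1, …, i_n} (n ≥ 1) and let p be its parent, the node with label {0, i_1, …, i_{n−1}}. Then the sums of shortest-path distances satisfy the recursion d_x(g) = d_p(g) + 2·4^g − 2·4^{g−i_n}. -/
open Matrix BigOperators

/-- The triangles of the Koch network `K_g`: the initial triangle, plus, at each
iteration, one new triangle for each corner node of each existing triangle. -/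
def KochT : ℕ → Type
  | 0 => Unit
  | g + 1 => KochT g ⊕ (KochT g × Fin 3)

/-- The vertices of the Koch network `K_g`: at each iteration, each corner node of
each existing triangle spawns two new vertices. -/
def KochV : ℕ → Type
  | 0 => Fin 3
  | g + 1 => KochV g ⊕ (KochT g × Fin 3 × Fin 2)

instance kochTFintype : ∀ g, Fintype (KochT g)
  | 0 => inferInstanceAs (Fintype Unit)
  | g + 1 =>
    letI := kochTFintype g
    inferInstanceAs (Fintype (KochT g ⊕ (KochT g × Fin 3)))

instance kochVFintype : ∀ g, Fintype (KochV g)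
  | 0 => inferInstanceAs (Fintype (Fin 3))
  | g + 1 =>
    letI := kochVFintype g
    letI := kochTFintype g
    inferInstanceAs (Fintype (KochV g ⊕ (KochT g × Fin 3 × Fin 2)))

instance kochTDecEq : ∀ g, DecidableEq (KochT g)
  | 0 => inferInstanceAs (DecidableEq Unit)
  | g + 1 =>
    letI := kochTDecEq g
    inferInstanceAs (DecidableEq (KochT g ⊕ (KochT g × Fin 3)))

instance kochVDecEq : ∀ g, DecidableEq (KochV g)
  | 0 => inferInstanceAs (DecidableEq (Fin 3))
  | g + 1 =>
    letI := kochVDecEq g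
    letI := kochTDecEq g
    inferInstanceAs (DecidableEq (KochV g ⊕ (KochT g × Fin 3 × Fin 2)))

/-- The three corners of a triangle of `K_g`.  For a triangle created at some
iteration and attached to corner `i` of triangle `t`, corner `0` is the mother node
(corner `i` of `t`) and corners `1`, `2` are the two newly created nodes. -/
def kochCorner : ∀ g, KochT g → Fin 3 → KochV g
  | 0, _, c => c
  | g + 1, Sum.inl t, c => Sum.inl (kochCorner g t c)
  | g + 1, Sum.inr (t, i), c =>
    if c = 0 then Sum.inl (kochCorner g t i)
    else if c = 1 then Sum.inr (t, i, 0) else Sum.inr (t, i, 1)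

/-- The Koch network `K_g` as a simple graph: two vertices are adjacent iff they
are distinct corners of a common triangle. -/
def kochGraph (g : ℕ) : SimpleGraph (KochV g) :=
  SimpleGraph.fromRel (fun x y => ∃ (t : KochT g) (c c' : Fin 3),
    c ≠ c' ∧ x = kochCorner g t c ∧ y = kochCorner g t c')

/-- The level of a node of `K_g`: the iteration at which it was created.  The three
initial nodes (the hubs) are at level `0`. -/
def kochLevel : ∀ g, KochV g → ℕ
  | 0, _ => 0
  | g + 1, Sum.inl x => kochLevel g x
  | g + 1, Sum.inr _ => g + 1

/-- The parent (mother node) of a node of `K_g`; the hubs have no parent. -/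
def kochParent : ∀ g, KochV g → Option (KochV g)
  | 0, _ => none
  | g + 1, Sum.inl x => (kochParent g x).map Sum.inl
  | g + 1, Sum.inr (t, i, _) => some (Sum.inl (kochCorner g t i))

/-- The label `{0, i_1, …, i_n}` of a node of `K_g`: the increasing list of levels of
the nodes on the unique shortest path from the nearest hub to the node.  A hub has
label `[0]`; a node created at iteration `g+1` appends `g+1` to its mother's label. -/
def kochLabel : ∀ g, KochV g → List ℕ
  | 0, _ => [0]
  | g + 1, Sum.inl x => kochLabel g x
  | g + 1, Sum.inr (t, i, _) => kochLabel g (kochCorner g t i) ++ [g + 1]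

/-- The Laplacian matrix (over `ℝ`) of a simple graph (all edge weights `1`). -/
noncomputable def glap {V : Type*} [Fintype V] (G : SimpleGraph V) : Matrix V V ℝ := by
  classical exact SimpleGraph.lapMatrix ℝ G

/-- The pseudoinverse `L† = (L + (1/N)·J)⁻¹ - (1/N)·J` of the graph Laplacian. -/
noncomputable def gdag {V : Type*} [Fintype V] [DecidableEq V] (G : SimpleGraph V) : Matrix V V ℝ :=
  (glap G + ((Fintype.card V : ℝ))⁻¹ • JMat V)⁻¹ - ((Fintype.card V : ℝ))⁻¹ • JMat V

/-- The resistance distance `r_{xy} = L†_{xx} + L†_{yy} - 2 L†_{xy}`. -/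
noncomputable def gres {V : Type*} [Fintype V] [DecidableEq V] (G : SimpleGraph V) (x y : V) : ℝ :=
  gdag G x x + gdag G y y - 2 * gdag G x y

/-!
Distances in `K_{g+1}` are read off from `K_g`: the old nodes keep their mutual distances, and a
node created at a corner `c` is one step farther than `c` from every node except itself and its
sibling. Summing over all nodes, the distance sum `d_x` of an old node picks up the weighted sum
`w_x = ∑_y 2 ^ (g - level y) d_{xy}`, the weight of `y` being the number of triangles at `y`, and
`w_x` obeys a recursion of the same kind. Induction on `g` then gives simultaneously
`d_x - d_p = 2·4^g - 2·4^{g-i_n}` and `w_x - w_p = 3·4^g - 3·4^{g-i_n}`.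
-/

theorem SimpleGraph.le_length_of_adj_le_succ {V : Type*} {G : SimpleGraph V} {D : V → V → ℕ}
    (hself : ∀ x, D x x = 0) (hadj : ∀ ⦃x y⦄, G.Adj x y → ∀ z, D x z ≤ D y z + 1)
    {x y : V} (w : G.Walk x y) : D x y ≤ w.length := by
  induction w with
  | nil => simp [hself]
  | cons h _ ih => exact (hadj h _).trans (by simpa using ih)

theorem SimpleGraph.dist_eq_of_adj_le_succ {V : Type*} {G : SimpleGraph V} {D : V → V → ℕ}
    (hself : ∀ x, D x x = 0) (hadj : ∀ ⦃x y⦄, G.Adj x y → ∀ z, D x z ≤ D y z + 1)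
    (hwalk : ∀ x y, ∃ w : G.Walk x y, w.length = D x y) (x y : V) : G.dist x y = D x y := by
  obtain ⟨w, hw⟩ := hwalk x y
  obtain ⟨w', hw'⟩ := SimpleGraph.Reachable.exists_walk_length_eq_dist ⟨w⟩
  exact le_antisymm (hw ▸ SimpleGraph.dist_le w) (hw' ▸ G.le_length_of_adj_le_succ hself hadj w')

/- `old` and `new` give the nodes and triangles of generation `g + 1` their type `KochV (g + 1)`,
`KochT (g + 1)`: a bare `Sum.inl u` has type `KochV g ⊕ _`, which agrees with `KochV (g + 1)` only
after unfolding, and `simp` and `rw` refuse to rewrite under such terms. -/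

namespace KochT

def old {g : ℕ} (t : KochT g) : KochT (g + 1) := Sum.inl t

def new {g : ℕ} (t : KochT g) (i : Fin 3) : KochT (g + 1) := Sum.inr (t, i)

theorem sum_succ {M : Type*} [AddCommMonoid M] {g : ℕ} (f : KochT (g + 1) → M) :
    ∑ t, f t = ∑ t, f (old t) + ∑ t, ∑ i, f (new t i) :=
  (Fintype.sum_sum_type f).trans (congrArg (∑ t, f (old t) + ·) (Fintype.sum_prod_type _))

end KochT

namespace KochV

def old {g : ℕ} (u : KochV g) : KochV (g + 1) := Sum.inl u

def new {g : ℕ} (t : KochT g) (i : Fin 3) (j : Fin 2) : KochV (g + 1) := Sum.inr (t, i, j)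

theorem old_or_new {g : ℕ} (x : KochV (g + 1)) :
    (∃ u, x = old u) ∨ ∃ t i j, x = new t i j := by
  rcases x with u | ⟨t, i, j⟩
  exacts [.inl ⟨u, rfl⟩, .inr ⟨t, i, j, rfl⟩]

theorem sum_succ {M : Type*} [AddCommMonoid M] {g : ℕ} (f : KochV (g + 1) → M) :
    ∑ y, f y = ∑ u, f (old u) + ∑ t, ∑ i, ∑ j, f (new t i j) :=
  (Fintype.sum_sum_type f).trans (congrArg (∑ u, f (old u) + ·) ((Fintype.sum_prod_type _).trans
    (Finset.sum_congr rfl fun _ _ => Fintype.sum_prod_type _)))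

@[simp] theorem old_inj {g : ℕ} {u v : KochV g} : old u = old v ↔ u = v := Sum.inl_injective.eq_iff

@[simp] theorem new_inj {g : ℕ} {t t' : KochT g} {i i' : Fin 3} {j j' : Fin 2} :
    new t i j = new t' i' j' ↔ t = t' ∧ i = i' ∧ j = j' :=
  Sum.inr_injective.eq_iff.trans (by simp)

@[simp] theorem old_ne_new {g : ℕ} (u : KochV g) (t : KochT g) (i : Fin 3) (j : Fin 2) :
    old u ≠ new t i j := Sum.inl_ne_inr

end KochV

open KochV

@[simp] theorem kochCorner_old (g : ℕ) (t : KochT g) (c : Fin 3) :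
    kochCorner (g + 1) t.old c = old (kochCorner g t c) := rfl

@[simp] theorem kochCorner_new_zero (g : ℕ) (t : KochT g) (i : Fin 3) :
    kochCorner (g + 1) (t.new i) 0 = old (kochCorner g t i) := rfl

@[simp] theorem kochCorner_new_one (g : ℕ) (t : KochT g) (i : Fin 3) :
    kochCorner (g + 1) (t.new i) 1 = new t i 0 := rfl

@[simp] theorem kochCorner_new_two (g : ℕ) (t : KochT g) (i : Fin 3) :
    kochCorner (g + 1) (t.new i) 2 = new t i 1 := rfl

@[simp] theorem kochLevel_old (g : ℕ) (u : KochV g) : kochLevel (g + 1) (old u) = kochLevel g u :=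
  rfl

@[simp] theorem kochLevel_new (g : ℕ) (t : KochT g) (i : Fin 3) (j : Fin 2) :
    kochLevel (g + 1) (new t i j) = g + 1 := rfl

@[simp] theorem kochParent_old (g : ℕ) (u : KochV g) :
    kochParent (g + 1) (old u) = (kochParent g u).map old := rfl

@[simp] theorem kochParent_new (g : ℕ) (t : KochT g) (i : Fin 3) (j : Fin 2) :
    kochParent (g + 1) (new t i j) = some (old (kochCorner g t i)) := rfl

def kochDist : ∀ g, KochV g → KochV g → ℕ
  | 0, x, y => if x = y then 0 else 1
  | g + 1, Sum.inl u, Sum.inl v => kochDist g u v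
  | g + 1, Sum.inl u, Sum.inr (t, i, _) => kochDist g u (kochCorner g t i) + 1
  | g + 1, Sum.inr (t, i, _), Sum.inl v => kochDist g (kochCorner g t i) v + 1
  | g + 1, Sum.inr (t, i, j), Sum.inr (t', i', j') =>
      if t = t' ∧ i = i' then (if j = j' then 0 else 1)
      else kochDist g (kochCorner g t i) (kochCorner g t' i') + 2

section kochDist

variable {g : ℕ}

@[simp] theorem kochDist_old_old (u v : KochV g) : kochDist (g + 1) (old u) (old v) = kochDist g u v :=
  rfl

@[simp] theorem kochDist_old_new (u : KochV g) (t : KochT g) (i : Fin 3) (j : Fin 2) :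
    kochDist (g + 1) (old u) (new t i j) = kochDist g u (kochCorner g t i) + 1 := rfl

@[simp] theorem kochDist_new_old (u : KochV g) (t : KochT g) (i : Fin 3) (j : Fin 2) :
    kochDist (g + 1) (new t i j) (old u) = kochDist g (kochCorner g t i) u + 1 := rfl

@[simp] theorem kochDist_new_new_same (t : KochT g) (i : Fin 3) (j j' : Fin 2) :
    kochDist (g + 1) (new t i j) (new t i j') = if j = j' then 0 else 1 :=
  if_pos ⟨rfl, rfl⟩

theorem kochDist_new_new_of_ne {t t' : KochT g} {i i' : Fin 3} (j j' : Fin 2)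
    (h : ¬(t = t' ∧ i = i')) :
    kochDist (g + 1) (new t i j) (new t' i' j') =
      kochDist g (kochCorner g t i) (kochCorner g t' i') + 2 :=
  if_neg h

end kochDist

theorem kochDist_self : ∀ g (x : KochV g), kochDist g x x = 0
  | 0, _ => by simp [kochDist]
  | g + 1, Sum.inl u => kochDist_self g u
  | g + 1, Sum.inr _ => by simp [kochDist]

theorem kochDist_corner_le : ∀ g (t : KochT g) (c c' : Fin 3) (z : KochV g),
    kochDist g (kochCorner g t c) z ≤ kochDist g (kochCorner g t c') z + 1
  | 0, _, c, c', z => (ite_le_one zero_le_one le_rfl).trans (Nat.le_add_left 1 _)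
  | g + 1, Sum.inl t, c, c', Sum.inl w => kochDist_corner_le g t c c' w
  | g + 1, Sum.inl t, c, c', Sum.inr (t', i', _) => by
      simpa [kochCorner, kochDist] using kochDist_corner_le g t c c' (kochCorner g t' i')
  | g + 1, Sum.inr (t, i), c, c', Sum.inl w => by
      fin_cases c <;> fin_cases c' <;> simp [kochCorner, kochDist] <;> omega
  | g + 1, Sum.inr (t, i), c, c', Sum.inr (t', i', j') => by
      by_cases h : t = t' ∧ i = i'
      · obtain ⟨rfl, rfl⟩ := h
        fin_cases c <;> fin_cases c' <;> fin_cases j' <;> simp [kochCorner, kochDist, kochDist_self]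
      · fin_cases c <;> fin_cases c' <;> simp [kochCorner, kochDist, h]

theorem kochDist_le_of_adj {g : ℕ} {x y : KochV g} (h : (kochGraph g).Adj x y) (z : KochV g) :
    kochDist g x z ≤ kochDist g y z + 1 := by
  obtain ⟨-, ⟨t, c, c', -, rfl, rfl⟩ | ⟨t, c, c', -, rfl, rfl⟩⟩ := h
  all_goals exact kochDist_corner_le g t _ _ z

theorem kochGraph_adj_of_ne {g : ℕ} {t : KochT g} {c c' : Fin 3}
    (h : kochCorner g t c ≠ kochCorner g t c') :
    (kochGraph g).Adj (kochCorner g t c) (kochCorner g t c') :=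
  ⟨h, Or.inl ⟨t, c, c', fun hc => h (hc ▸ rfl), rfl, rfl⟩⟩

theorem kochGraph_adj_mother (g : ℕ) (t : KochT g) (i : Fin 3) (j : Fin 2) :
    (kochGraph (g + 1)).Adj (old (kochCorner g t i)) (new t i j) := by
  fin_cases j
  · simpa using kochGraph_adj_of_ne (t := t.new i) (c := 0) (c' := 1) (by simp)
  · simpa using kochGraph_adj_of_ne (t := t.new i) (c := 0) (c' := 2) (by simp)

theorem kochGraph_adj_sibling (g : ℕ) (t : KochT g) (i : Fin 3) :
    (kochGraph (g + 1)).Adj (new t i 0) (new t i 1) := by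
  simpa using kochGraph_adj_of_ne (t := t.new i) (c := 1) (c' := 2) (by simp)

def kochGraphEmbedding (g : ℕ) : kochGraph g →g kochGraph (g + 1) where
  toFun := old
  map_rel' := by
    rintro _ _ ⟨hne, ⟨t, c, c', hc, rfl, rfl⟩ | ⟨t, c, c', hc, rfl, rfl⟩⟩
    · exact ⟨by simpa using hne, Or.inl ⟨t.old, c, c', hc, rfl, rfl⟩⟩
    · exact ⟨by simpa using hne, Or.inr ⟨t.old, c, c', hc, rfl, rfl⟩⟩

theorem exists_walk_length_eq_kochDist : ∀ g (x y : KochV g),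
    ∃ w : (kochGraph g).Walk x y, w.length = kochDist g x y
  | 0, x, y => by
      by_cases h : x = y
      · subst h
        exact ⟨.nil, (kochDist_self 0 x).symm⟩
      · exact ⟨SimpleGraph.Adj.toWalk ⟨h, Or.inl ⟨(), x, y, h, rfl, rfl⟩⟩, (if_neg h).symm⟩
  | g + 1, x, y => by
      have lift (u v : KochV g) :
          ∃ w : (kochGraph (g + 1)).Walk (old u) (old v), w.length = kochDist g u v :=
        have ⟨w, hw⟩ := exists_walk_length_eq_kochDist g u v
        ⟨w.map (kochGraphEmbedding g), (SimpleGraph.Walk.length_map _ w).trans hw⟩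
      have mother := kochGraph_adj_mother g
      obtain ⟨u, rfl⟩ | ⟨t, i, j, rfl⟩ := x.old_or_new <;>
        obtain ⟨v, rfl⟩ | ⟨t', i', j', rfl⟩ := y.old_or_new
      · simpa using lift u v
      · obtain ⟨w, hw⟩ := lift u (kochCorner g t' i')
        exact ⟨w.concat (mother t' i' j'), by simp [hw]⟩
      · obtain ⟨w, hw⟩ := lift (kochCorner g t i) v
        exact ⟨.cons (mother t i j).symm w, by simp [hw]⟩
      · by_cases h : t = t' ∧ i = i'
        · obtain ⟨rfl, rfl⟩ := h
          fin_cases j <;> fin_cases j'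
          · exact ⟨.nil, by simp⟩
          · exact ⟨(kochGraph_adj_sibling g t i).toWalk, by simp⟩
          · exact ⟨(kochGraph_adj_sibling g t i).symm.toWalk, by simp⟩
          · exact ⟨.nil, by simp⟩
        · obtain ⟨w, hw⟩ := lift (kochCorner g t i) (kochCorner g t' i')
          exact ⟨.cons (mother t i j).symm (w.concat (mother t' i' j')),
            by simp [kochDist_new_new_of_ne j j' h, hw]⟩

theorem kochGraph_dist_eq_kochDist (g : ℕ) (x y : KochV g) :
    (kochGraph g).dist x y = kochDist g x y :=
  SimpleGraph.dist_eq_of_adj_le_succ (kochDist_self g) (fun _ _ h => kochDist_le_of_adj h)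
    (exists_walk_length_eq_kochDist g) x y

theorem kochLevel_le : ∀ g (x : KochV g), kochLevel g x ≤ g
  | 0, _ => le_rfl
  | g + 1, Sum.inl u => (kochLevel_le g u).trans g.le_succ
  | _ + 1, Sum.inr _ => le_rfl

theorem card_kochT : ∀ g, Fintype.card (KochT g) = 4 ^ g
  | 0 => rfl
  | g + 1 => by
      rw [show Fintype.card (KochT (g + 1)) = Fintype.card (KochT g ⊕ KochT g × Fin 3) from rfl,
        Fintype.card_sum, Fintype.card_prod, card_kochT g, Fintype.card_fin, pow_succ]
      ring

theorem card_kochV : ∀ g, Fintype.card (KochV g) = 2 * 4 ^ g + 1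
  | 0 => rfl
  | g + 1 => by
      rw [show Fintype.card (KochV (g + 1)) = Fintype.card (KochV g ⊕ KochT g × Fin 3 × Fin 2)
          from rfl, Fintype.card_sum, Fintype.card_prod, Fintype.card_prod, card_kochV g,
        card_kochT g, Fintype.card_fin, Fintype.card_fin, pow_succ]
      ring

/-- `2 ^ (g - level y)` is the number of triangles of `K_g` having `y` as a corner
(`sum_kochCorner`). -/
def kochWeight (g : ℕ) (y : KochV g) : ℕ := 2 ^ (g - kochLevel g y)

@[simp] theorem kochWeight_old (g : ℕ) (u : KochV g) :
    kochWeight (g + 1) (old u) = 2 * kochWeight g u := by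
  have := kochLevel_le g u
  rw [kochWeight, kochWeight, kochLevel_old, show g + 1 - kochLevel g u = g - kochLevel g u + 1 by
    omega, pow_succ, mul_comm]

@[simp] theorem kochWeight_new (g : ℕ) (t : KochT g) (i : Fin 3) (j : Fin 2) :
    kochWeight (g + 1) (new t i j) = 1 := by
  simp [kochWeight]

theorem sum_kochCorner {M : Type*} [AddCommMonoid M] : ∀ (g : ℕ) (f : KochV g → M),
    ∑ t, ∑ c, f (kochCorner g t c) = ∑ y, kochWeight g y • f y
  | 0, f => by simp [kochWeight, kochCorner, card_kochT]; rfl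
  | g + 1, f =>
      calc ∑ t, ∑ c, f (kochCorner (g + 1) t c)
          = 2 • ∑ t, ∑ c, f (old (kochCorner g t c)) + ∑ t, ∑ i, ∑ j, f (new t i j) := by
            simp [KochT.sum_succ, Fin.sum_univ_three, Finset.sum_add_distrib]
            abel
        _ = 2 • ∑ y, kochWeight g y • f (old y) + ∑ t, ∑ i, ∑ j, f (new t i j) := by
            rw [sum_kochCorner g (fun y => f (old y))]
        _ = ∑ y, kochWeight (g + 1) y • f y := by
            simp [KochV.sum_succ, mul_smul, Finset.smul_sum]

theorem sum_kochWeight (g : ℕ) : ∑ y, kochWeight g y = 3 * 4 ^ g := by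
  have h := sum_kochCorner (M := ℕ) g fun _ => 1
  simp only [smul_eq_mul, mul_one] at h
  simp [← h, card_kochT, mul_comm]

def kochDistSum (g : ℕ) (f : KochV g → ℕ) (x : KochV g) : ℕ := ∑ y, f y * kochDist g x y

section kochDistSum

variable {g : ℕ}

theorem kochDistSum_const_mul (c : ℕ) (f : KochV g → ℕ) (x : KochV g) :
    kochDistSum g (fun y => c * f y) x = c * kochDistSum g f x := by
  simp [kochDistSum, Finset.mul_sum, mul_assoc]

theorem kochDistSum_old (f : KochV (g + 1) → ℕ) (hf : ∀ t i j, f (new t i j) = 1) (u : KochV g) :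
    kochDistSum (g + 1) f (old u) =
      kochDistSum g (fun v => f (old v)) u + 2 * kochDistSum g (kochWeight g) u + 6 * 4 ^ g :=
  calc kochDistSum (g + 1) f (old u)
      = kochDistSum g (fun v => f (old v)) u +
          2 * ∑ t, ∑ c, (kochDist g u (kochCorner g t c) + 1) := by
        simp [kochDistSum, KochV.sum_succ, hf, Finset.mul_sum]
    _ = _ := by
        rw [sum_kochCorner g fun y => kochDist g u y + 1]
        simp [kochDistSum, mul_add, Finset.sum_add_distrib, sum_kochWeight, mul_comm]
        ring

-- `new t i (j + 1)` is the sibling of `new t i j`.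
theorem kochDist_new_add (t : KochT g) (i : Fin 3) (j : Fin 2) (y : KochV (g + 1)) :
    kochDist (g + 1) (new t i j) y +
        ((if y = new t i j then 2 else 0) + if y = new t i (j + 1) then 1 else 0) =
      kochDist (g + 1) (old (kochCorner g t i)) y + 1 := by
  obtain ⟨v, rfl⟩ | ⟨t', i', j', rfl⟩ := y.old_or_new
  · simp
  · by_cases h : t = t' ∧ i = i'
    · obtain ⟨rfl, rfl⟩ := h
      fin_cases j <;> fin_cases j' <;> simp [kochDist_self]
    · have h' : ¬(t' = t ∧ i' = i) := fun ⟨h₁, h₂⟩ => h ⟨h₁.symm, h₂.symm⟩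
      simp [kochDist_new_new_of_ne j j' h]
      tauto

theorem kochDistSum_new (f : KochV (g + 1) → ℕ) (t : KochT g) (i : Fin 3) (j : Fin 2) :
    kochDistSum (g + 1) f (new t i j) + (2 * f (new t i j) + f (new t i (j + 1))) =
      kochDistSum (g + 1) f (old (kochCorner g t i)) + ∑ y, f y :=
  calc _ = ∑ y, f y * (kochDist (g + 1) (new t i j) y +
          ((if y = new t i j then 2 else 0) + if y = new t i (j + 1) then 1 else 0)) := by
        simp [kochDistSum, mul_add, Finset.sum_add_distrib, mul_comm]
    _ = _ := by
        simp [kochDist_new_add, kochDistSum, mul_add, Finset.sum_add_distrib]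

end kochDistSum

theorem kochDistSum_parent : ∀ g (x p : KochV g), kochParent g x = some p →
    kochDistSum g (fun _ => 1) x + 2 * 4 ^ (g - kochLevel g x) =
        kochDistSum g (fun _ => 1) p + 2 * 4 ^ g ∧
      kochDistSum g (kochWeight g) x + 3 * 4 ^ (g - kochLevel g x) =
        kochDistSum g (kochWeight g) p + 3 * 4 ^ g
  | 0, _, _, hp => by simp [kochParent] at hp
  | g + 1, x, p, hp => by
      obtain ⟨u, rfl⟩ | ⟨t, i, j, rfl⟩ := x.old_or_new
      · obtain ⟨q, hq, rfl⟩ := Option.map_eq_some_iff.mp (by simpa using hp)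
        obtain ⟨hd, hw⟩ := kochDistSum_parent g u q hq
        have hpow : 4 ^ (g + 1 - kochLevel g u) = 4 * 4 ^ (g - kochLevel g u) := by
          rw [← pow_succ', Nat.sub_add_comm (kochLevel_le g u)]
        simp only [kochDistSum_old (fun _ => 1) (fun _ _ _ => rfl),
          kochDistSum_old (kochWeight (g + 1)) (kochWeight_new g),
          kochWeight_old, kochDistSum_const_mul, kochLevel_old, hpow, pow_succ]
        constructor <;> omega
      · obtain rfl : old (kochCorner g t i) = p := by simpa using hp
        have hd := kochDistSum_new (fun _ => 1) t i j
        have hw := kochDistSum_new (kochWeight (g + 1)) t i j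
        simp only [kochWeight_new, Finset.sum_const, Finset.card_univ, card_kochV,
          sum_kochWeight, smul_eq_mul, mul_one] at hd hw
        simp only [kochLevel_new, Nat.sub_self, pow_zero]
        constructor <;> omega

/-- In the Koch network `K_g`, if `p` is the parent of a node `x` (so `x` has label
`{0, i_1, …, i_n}` with `n ≥ 1`, `i_n = kochLevel g x`, and `p` has label
`{0, i_1, …, i_{n-1}}`), then the sums of shortest-path distances satisfy
`d_x(g) = d_p(g) + 2·4^g - 2·4^{g - i_n}`. -/
theorem stmt_11 (g : ℕ) (x p : KochV g) (hp : kochParent g x = some p) :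
    ∑ y : KochV g, (kochGraph g).dist x y =
      (∑ y : KochV g, (kochGraph g).dist p y) + 2 * 4 ^ g -
        2 * 4 ^ (g - kochLevel g x) := by
  have hsum (z : KochV g) : ∑ y, (kochGraph g).dist z y = kochDistSum g (fun _ => 1) z := by
    simp [kochDistSum, kochGraph_dist_eq_kochDist]
  rw [hsum, hsum]
  have := (kochDistSum_parent g x p hp).1
  omega
end

section
/- For a node x in the Koch network K_g with label {0, i_1, …, i_n}, the sum of shortest-path distances from x to all nodes equals d_x(g) = (g+2)·4^g + 2n·4^g − Σ_{k=1}^{n} 2·4^{g−i_k}. -/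
open Matrix BigOperators

/-!
A node created at iteration `g + 1` is at distance one from its mother, and the distance
between nodes of `K_{g+1}` is obtained from distances in `K_g` between mothers; this gives an
explicit recursive distance `kochDist`, which is exact because it drops by at most one along an
edge and is realised by a walk.

The new nodes of `K_{g+1}` hang off the corners of the triangles of `K_g`, so the distance sum
`d_x(g+1)` involves the corner sum `C_x(g) = ∑_{triangles T} ∑_{corners c of T} d(x, c)`. The pair
`(d_x, C_x)` obeys a linear recurrence, while passing from a mother to a child multiplies the
label weight `∑_k 4^{g - i_k}` by four and adds one. Induction on `g` then gives
`d_x(g) + 2 ∑_k 4^{g - i_k} = (g + 2 + 2n) 4^g` together with a companion formula for `C_x(g)`.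
-/

namespace SimpleGraph

variable {V : Type*} {G : SimpleGraph V} {f : V → V → ℕ}

theorem le_length_of_le_succ_of_adj (hself : ∀ x, f x x = 0)
    (hadj : ∀ x z y, G.Adj x z → f x y ≤ f z y + 1) {x y : V} (w : G.Walk x y) :
    f x y ≤ w.length := by
  induction w with
  | nil => simp [hself]
  | cons h p ih => rw [Walk.length_cons]; exact (hadj _ _ _ h).trans (by omega)

theorem dist_eq_of_le_succ_of_adj (hself : ∀ x, f x x = 0)
    (hadj : ∀ x z y, G.Adj x z → f x y ≤ f z y + 1)
    (hwalk : ∀ x y, ∃ w : G.Walk x y, w.length = f x y) (x y : V) :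
    G.dist x y = f x y := by
  obtain ⟨w, hw⟩ := hwalk x y
  obtain ⟨w', hw'⟩ := w.reachable.exists_walk_length_eq_dist
  exact le_antisymm (hw ▸ dist_le w) (hw' ▸ le_length_of_le_succ_of_adj hself hadj w')

section ExistsWalk

variable {x y z : V} {n : ℕ}

theorem exists_walk_length_map {W : Type*} {G' : SimpleGraph W} (φ : G →g G')
    (h : ∃ w : G.Walk x y, w.length = n) : ∃ w : G'.Walk (φ x) (φ y), w.length = n :=
  let ⟨w, hw⟩ := h; ⟨w.map φ, by simp [hw]⟩

theorem exists_walk_length_cons (hxy : G.Adj x y) (h : ∃ w : G.Walk y z, w.length = n) :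
    ∃ w : G.Walk x z, w.length = n + 1 :=
  let ⟨w, hw⟩ := h; ⟨.cons hxy w, by simp [hw]⟩

theorem exists_walk_length_concat (h : ∃ w : G.Walk x y, w.length = n) (hyz : G.Adj y z) :
    ∃ w : G.Walk x z, w.length = n + 1 :=
  let ⟨w, hw⟩ := h; ⟨w.concat hyz, by simp [hw]⟩

end ExistsWalk

end SimpleGraph

namespace Koch

open SimpleGraph Finset

variable {g : ℕ}

theorem card_kochT : ∀ g, Fintype.card (KochT g) = 4 ^ g
  | 0 => rfl
  | g + 1 => by
    change Fintype.card (KochT g ⊕ (KochT g × Fin 3)) = _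
    rw [Fintype.card_sum, Fintype.card_prod, Fintype.card_fin, card_kochT g]
    ring

theorem card_kochV : ∀ g, Fintype.card (KochV g) = 2 * 4 ^ g + 1
  | 0 => rfl
  | g + 1 => by
    change Fintype.card (KochV g ⊕ (KochT g × Fin 3 × Fin 2)) = _
    rw [Fintype.card_sum, Fintype.card_prod, Fintype.card_prod, Fintype.card_fin,
      Fintype.card_fin, card_kochV g, card_kochT g]
    ring

theorem kochCorner_succ_inr_zero (t : KochT g) (i : Fin 3) :
    kochCorner (g + 1) (.inr (t, i)) 0 = .inl (kochCorner g t i) := rfl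

theorem kochCorner_succ_inr_succ (t : KochT g) (i : Fin 3) (j : Fin 2) :
    kochCorner (g + 1) (.inr (t, i)) j.succ = .inr (t, i, j) := by
  fin_cases j <;> rfl

theorem sum_kochV_succ {M : Type*} [AddCommMonoid M] (f : KochV (g + 1) → M) :
    ∑ v, f v = ∑ x, f (.inl x) + ∑ q : KochT g × Fin 3, ∑ j : Fin 2, f (.inr (q.1, q.2, j)) := by
  refine (Fintype.sum_sum_type f).trans (congrArg _ ?_)
  rw [← Fintype.sum_prod_type']
  exact ((Equiv.prodAssoc _ _ _).sum_comp _).symm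

theorem sum_kochCorner_succ {M : Type*} [AddCommMonoid M] (f : KochV (g + 1) → M) :
    ∑ q : KochT (g + 1) × Fin 3, f (kochCorner (g + 1) q.1 q.2) =
      ∑ q : KochT g × Fin 3, f (.inl (kochCorner g q.1 q.2)) +
        ∑ q : KochT g × Fin 3,
          (f (.inl (kochCorner g q.1 q.2)) + ∑ j : Fin 2, f (.inr (q.1, q.2, j))) := by
  rw [Fintype.sum_prod_type' (fun t c => f (kochCorner (g + 1) t c))]
  refine (Fintype.sum_sum_type fun t => ∑ c : Fin 3, f (kochCorner (g + 1) t c)).trans ?_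
  refine congrArg₂ (· + ·) (Fintype.sum_prod_type' _).symm
    (Fintype.sum_congr _ _ fun ⟨t, i⟩ => (Fin.sum_univ_succ _).trans ?_)
  exact congrArg _ (Fintype.sum_congr _ _ fun j => congrArg f (kochCorner_succ_inr_succ t i j))

theorem kochGraph_adj_iff {x y : KochV g} :
    (kochGraph g).Adj x y ↔ x ≠ y ∧ ∃ t c c', x = kochCorner g t c ∧ y = kochCorner g t c' := by
  rw [kochGraph, fromRel_adj]
  constructor
  · rintro ⟨hne, ⟨t, c, c', -, rfl, rfl⟩ | ⟨t, c, c', -, rfl, rfl⟩⟩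
    exacts [⟨hne, t, c, c', rfl, rfl⟩, ⟨hne, t, c', c, rfl, rfl⟩]
  · rintro ⟨hne, t, c, c', rfl, rfl⟩
    exact ⟨hne, .inl ⟨t, c, c', fun h => hne (h ▸ rfl), rfl, rfl⟩⟩

theorem kochGraph_adj_inl {a b : KochV g} (h : (kochGraph g).Adj a b) :
    (kochGraph (g + 1)).Adj (.inl a) (.inl b) := by
  obtain ⟨hne, t, c, c', rfl, rfl⟩ := kochGraph_adj_iff.1 h
  exact kochGraph_adj_iff.2 ⟨fun h => hne (Sum.inl_injective h), .inl t, c, c', rfl, rfl⟩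

theorem kochGraph_adj_mother (t : KochT g) (i : Fin 3) (j : Fin 2) :
    (kochGraph (g + 1)).Adj (.inl (kochCorner g t i)) (.inr (t, i, j)) :=
  kochGraph_adj_iff.2 ⟨Sum.inl_ne_inr, .inr (t, i), 0, j.succ,
    kochCorner_succ_inr_zero t i, (kochCorner_succ_inr_succ t i j).symm⟩

theorem kochGraph_adj_sibling (t : KochT g) (i : Fin 3) {j j' : Fin 2} (h : j ≠ j') :
    (kochGraph (g + 1)).Adj (.inr (t, i, j)) (.inr (t, i, j')) :=
  kochGraph_adj_iff.2 ⟨fun h' => h (congrArg (·.2.2) (Sum.inr.inj h')), .inr (t, i),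
    j.succ, j'.succ, (kochCorner_succ_inr_succ t i j).symm, (kochCorner_succ_inr_succ t i j').symm⟩

theorem kochGraph_succ_adj_cases {x z : KochV (g + 1)} (h : (kochGraph (g + 1)).Adj x z) :
    (∃ a b, x = .inl a ∧ z = .inl b ∧ (kochGraph g).Adj a b) ∨
    (∃ t i j, x = .inl (kochCorner g t i) ∧ z = .inr (t, i, j)) ∨
    (∃ t i j, x = .inr (t, i, j) ∧ z = .inl (kochCorner g t i)) ∨
    (∃ t i j j', j ≠ j' ∧ x = .inr (t, i, j) ∧ z = .inr (t, i, j')) := by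
  obtain ⟨hne, t, c, c', rfl, rfl⟩ := kochGraph_adj_iff.1 h
  rcases t with t | ⟨t, i⟩
  · exact .inl ⟨_, _, rfl, rfl,
      kochGraph_adj_iff.2 ⟨fun h => hne (congrArg Sum.inl h), t, c, c', rfl, rfl⟩⟩
  rcases Fin.eq_zero_or_eq_succ c with rfl | ⟨j, rfl⟩ <;>
    rcases Fin.eq_zero_or_eq_succ c' with rfl | ⟨j', rfl⟩ <;>
    simp only [kochCorner_succ_inr_zero, kochCorner_succ_inr_succ] at hne ⊢
  · exact absurd rfl hne
  · exact .inr (.inl ⟨t, i, j', rfl, rfl⟩)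
  · exact .inr (.inr (.inl ⟨t, i, j, rfl, rfl⟩))
  · exact .inr (.inr (.inr ⟨t, i, j, j', fun h => hne (h ▸ rfl), rfl, rfl⟩))

def kochDist : ∀ g, KochV g → KochV g → ℕ
  | 0, x, y => if x = y then 0 else 1
  | g + 1, .inl x, .inl y => kochDist g x y
  | g + 1, .inl x, .inr (t, i, _) => kochDist g x (kochCorner g t i) + 1
  | g + 1, .inr (t, i, _), .inl y => kochDist g (kochCorner g t i) y + 1
  | g + 1, .inr (t, i, j), .inr (t', i', j') =>
    if (t, i) = (t', i') then (if j = j' then 0 else 1)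
    else kochDist g (kochCorner g t i) (kochCorner g t' i') + 2

section kochDist

variable (x y : KochV g) (t : KochT g) (i : Fin 3) (j j' : Fin 2)

@[simp] theorem kochDist_inl_inl : kochDist (g + 1) (.inl x) (.inl y) = kochDist g x y := rfl

@[simp] theorem kochDist_inl_inr :
    kochDist (g + 1) (.inl x) (.inr (t, i, j)) = kochDist g x (kochCorner g t i) + 1 := rfl

@[simp] theorem kochDist_inr_inl :
    kochDist (g + 1) (.inr (t, i, j)) (.inl y) = kochDist g (kochCorner g t i) y + 1 := rfl

@[simp] theorem kochDist_inr_inr_same :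
    kochDist (g + 1) (.inr (t, i, j)) (.inr (t, i, j')) = if j = j' then 0 else 1 := by
  simp [kochDist]

theorem kochDist_inr_inr_of_ne {t t' : KochT g} {i i' : Fin 3} (h : (t, i) ≠ (t', i')) :
    kochDist (g + 1) (.inr (t, i, j)) (.inr (t', i', j')) =
      kochDist g (kochCorner g t i) (kochCorner g t' i') + 2 := by
  rw [kochDist, if_neg h]

end kochDist

@[simp] theorem kochDist_self : ∀ g (x : KochV g), kochDist g x x = 0
  | 0, x => by simp [kochDist]
  | g + 1, .inl x => kochDist_self g x
  | g + 1, .inr (t, i, j) => by simp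

theorem kochDist_le_succ_of_adj : ∀ g {x z : KochV g} (y : KochV g),
    (kochGraph g).Adj x z → kochDist g x y ≤ kochDist g z y + 1
  | 0, x, z, y, _ => by unfold kochDist; split_ifs <;> omega
  | g + 1, x, z, y, h => by
    rcases y with y | ⟨t', i', j''⟩ <;>
      rcases kochGraph_succ_adj_cases h with ⟨a, b, rfl, rfl, hab⟩ | ⟨t, i, j, rfl, rfl⟩ |
        ⟨t, i, j, rfl, rfl⟩ | ⟨t, i, j, j', -, rfl, rfl⟩
    · exact kochDist_le_succ_of_adj g y hab
    · simp only [kochDist_inl_inl, kochDist_inr_inl]; omega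
    · simp
    · simp
    · simpa using kochDist_le_succ_of_adj g (kochCorner g t' i') hab
    all_goals
      rcases eq_or_ne (t, i) (t', i') with hti | hti
      · obtain ⟨rfl, rfl⟩ := Prod.mk.inj hti
        simp only [kochDist_inl_inr, kochDist_inr_inr_same, kochDist_self]
        split_ifs <;> omega
      · simp only [kochDist_inl_inr, kochDist_inr_inr_of_ne _ _ hti]
        omega

def inlHom (g : ℕ) : kochGraph g →g kochGraph (g + 1) := ⟨Sum.inl, kochGraph_adj_inl⟩

theorem exists_walk_length_eq_kochDist :
    ∀ g (x y : KochV g), ∃ w : (kochGraph g).Walk x y, w.length = kochDist g x y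
  | 0, x, y => by
    by_cases h : x = y
    · subst h; exact ⟨.nil, by simp⟩
    · exact ⟨.cons (kochGraph_adj_iff.2 ⟨h, (), x, y, rfl, rfl⟩) .nil, by simp [kochDist, h]⟩
  | g + 1, .inl x, .inl y =>
    exists_walk_length_map (inlHom g) (exists_walk_length_eq_kochDist g x y)
  | g + 1, .inl x, .inr (t, i, j) =>
    exists_walk_length_concat (exists_walk_length_map (inlHom g)
      (exists_walk_length_eq_kochDist g x _)) (kochGraph_adj_mother t i j)
  | g + 1, .inr (t, i, j), .inl y =>
    exists_walk_length_cons (kochGraph_adj_mother t i j).symm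
      (exists_walk_length_map (inlHom g) (exists_walk_length_eq_kochDist g _ y))
  | g + 1, .inr (t, i, j), .inr (t', i', j') => by
    rcases eq_or_ne (t, i) (t', i') with hti | hti
    · obtain ⟨rfl, rfl⟩ := Prod.mk.inj hti
      by_cases hj : j = j'
      · subst hj; exact ⟨.nil, (kochDist_self _ _).symm⟩
      · exact ⟨.cons (kochGraph_adj_sibling t i hj) .nil,
          ((kochDist_inr_inr_same _ _ _ _).trans (if_neg hj)).symm⟩
    · rw [kochDist_inr_inr_of_ne _ _ hti]
      exact exists_walk_length_cons (kochGraph_adj_mother t i j).symm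
        (exists_walk_length_concat (exists_walk_length_map (inlHom g)
          (exists_walk_length_eq_kochDist g _ _)) (kochGraph_adj_mother t' i' j'))

theorem kochGraph_dist (g : ℕ) (x y : KochV g) : (kochGraph g).dist x y = kochDist g x y :=
  dist_eq_of_le_succ_of_adj (kochDist_self g) (fun _ _ y h => kochDist_le_succ_of_adj g y h)
    (exists_walk_length_eq_kochDist g) x y

def distSum (g : ℕ) (x : KochV g) : ℕ := ∑ y, kochDist g x y

def cornerDistSum (g : ℕ) (x : KochV g) : ℕ :=
  ∑ q : KochT g × Fin 3, kochDist g x (kochCorner g q.1 q.2)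

theorem distSum_inl (x : KochV g) :
    distSum (g + 1) (.inl x) = distSum g x + 2 * cornerDistSum g x + 6 * 4 ^ g := by
  simp only [distSum, cornerDistSum, sum_kochV_succ, kochDist_inl_inl, kochDist_inl_inr,
    sum_add_distrib, ← mul_sum, sum_const, card_univ, Fintype.card_prod, card_kochT,
    Fintype.card_fin, smul_eq_mul]
  ring

theorem cornerDistSum_inl (x : KochV g) :
    cornerDistSum (g + 1) (.inl x) = 4 * cornerDistSum g x + 6 * 4 ^ g := by
  simp only [cornerDistSum, sum_kochCorner_succ, kochDist_inl_inl, kochDist_inl_inr,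
    sum_add_distrib, ← mul_sum, sum_const, card_univ, Fintype.card_prod, card_kochT,
    Fintype.card_fin, smul_eq_mul]
  ring

theorem sum_kochDist_inr_inr (t : KochT g) (i : Fin 3) (j : Fin 2) :
    ∑ q : KochT g × Fin 3, ∑ j' : Fin 2, kochDist (g + 1) (.inr (t, i, j)) (.inr (q.1, q.2, j'))
        + 3 = 2 * cornerDistSum g (kochCorner g t i) + 12 * 4 ^ g := by
  -- the slot `(t, i)` of `x` itself contributes `0 + 1` instead of `2 * 0 + 4`
  have hq : ∀ q : KochT g × Fin 3,
      ∑ j' : Fin 2, kochDist (g + 1) (.inr (t, i, j)) (.inr (q.1, q.2, j')) +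
        (if (t, i) = q then 3 else 0) =
      2 * kochDist g (kochCorner g t i) (kochCorner g q.1 q.2) + 4 := by
    rintro ⟨t', i'⟩
    rcases eq_or_ne (t, i) (t', i') with hti | hti
    · obtain ⟨rfl, rfl⟩ := Prod.mk.inj hti
      fin_cases j <;> simp [Fin.sum_univ_two]
    · simp [kochDist_inr_inr_of_ne _ _ hti, hti]
      ring
  have := Fintype.sum_congr _ _ hq
  simp only [sum_add_distrib, sum_ite_eq, mem_univ, if_true, ← mul_sum, sum_const, card_univ,
    Fintype.card_prod, card_kochT, Fintype.card_fin, smul_eq_mul] at this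
  rw [cornerDistSum, this]
  ring

theorem distSum_inr (t : KochT g) (i : Fin 3) (j : Fin 2) :
    distSum (g + 1) (.inr (t, i, j)) + 2 =
      distSum g (kochCorner g t i) + 2 * cornerDistSum g (kochCorner g t i) + 14 * 4 ^ g := by
  have := sum_kochDist_inr_inr t i j
  simp only [distSum, sum_kochV_succ, kochDist_inr_inl, sum_add_distrib, sum_const, card_univ,
    card_kochV, smul_eq_mul] at this ⊢
  omega

theorem cornerDistSum_inr (t : KochT g) (i : Fin 3) (j : Fin 2) :
    cornerDistSum (g + 1) (.inr (t, i, j)) + 3 =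
      4 * cornerDistSum g (kochCorner g t i) + 18 * 4 ^ g := by
  have := sum_kochDist_inr_inr t i j
  simp only [cornerDistSum, sum_kochCorner_succ, kochDist_inr_inl, sum_add_distrib, sum_const,
    card_univ, Fintype.card_prod, card_kochT, Fintype.card_fin, smul_eq_mul] at this ⊢
  omega

theorem kochLabel_inl (x : KochV g) : kochLabel (g + 1) (.inl x) = kochLabel g x := rfl

theorem kochLabel_ne_nil : ∀ g (x : KochV g), kochLabel g x ≠ []
  | 0, _ => by simp [kochLabel]
  | g + 1, .inl x => kochLabel_ne_nil g x
  | g + 1, .inr _ => by simp [kochLabel]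

theorem le_of_mem_kochLabel : ∀ g (x : KochV g) {i : ℕ}, i ∈ kochLabel g x → i ≤ g
  | 0, _, i, h => by simpa [kochLabel] using h
  | g + 1, .inl x, i, h => (le_of_mem_kochLabel g x h).trans g.le_succ
  | g + 1, .inr (t, c, _), i, h => by
    rcases List.mem_append.1 h with h | h
    · exact (le_of_mem_kochLabel g _ h).trans g.le_succ
    · exact (List.mem_singleton.1 h).le

theorem tail_kochLabel_inr (t : KochT g) (i : Fin 3) (j : Fin 2) :
    (kochLabel (g + 1) (.inr (t, i, j))).tail = (kochLabel g (kochCorner g t i)).tail ++ [g + 1] :=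
  List.tail_append_singleton_of_ne_nil (kochLabel_ne_nil g _)

def labelWeight (g : ℕ) (x : KochV g) : ℕ := ((kochLabel g x).tail.map fun i => 4 ^ (g - i)).sum

theorem labelWeight_inl (x : KochV g) : labelWeight (g + 1) (.inl x) = 4 * labelWeight g x := by
  unfold labelWeight
  rw [kochLabel_inl, ← List.sum_map_mul_left]
  refine congrArg _ (List.map_congr_left fun i hi => ?_)
  rw [Nat.succ_sub (le_of_mem_kochLabel g x (List.mem_of_mem_tail hi)), pow_succ, mul_comm]

theorem labelWeight_inr (t : KochT g) (i : Fin 3) (j : Fin 2) :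
    labelWeight (g + 1) (.inr (t, i, j)) = 4 * labelWeight g (kochCorner g t i) + 1 := by
  rw [← labelWeight_inl]
  unfold labelWeight
  rw [tail_kochLabel_inr, kochLabel_inl]
  simp

theorem distSum_cornerDistSum_closed_form : ∀ g (x : KochV g),
    distSum g x + 2 * labelWeight g x = (g + 2 + 2 * (kochLabel g x).tail.length) * 4 ^ g ∧
    2 * cornerDistSum g x + 6 * labelWeight g x =
      (3 * g + 4 + 6 * (kochLabel g x).tail.length) * 4 ^ g
  | 0, x => by revert x; decide
  | g + 1, .inl x => by
    obtain ⟨hd, hc⟩ := distSum_cornerDistSum_closed_form g x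
    rw [distSum_inl, cornerDistSum_inl, labelWeight_inl, kochLabel_inl, pow_succ]
    constructor <;> linarith
  | g + 1, .inr (t, i, j) => by
    obtain ⟨hd, hc⟩ := distSum_cornerDistSum_closed_form g (kochCorner g t i)
    have hd' := distSum_inr t i j
    have hc' := cornerDistSum_inr t i j
    rw [labelWeight_inr, tail_kochLabel_inr, List.length_append, List.length_singleton, pow_succ]
    constructor <;> linarith

end Koch

/-- For a node `x` of the Koch network `K_g` with label `{0, i_1, …, i_n}`, the sum
of shortest-path distances from `x` to all nodes equals
`d_x(g) = (g+2)·4^g + 2n·4^g - Σ_{k=1}^{n} 2·4^{g-i_k}`. -/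
theorem stmt_12 (g : ℕ) (x : KochV g) :
    ∑ y : KochV g, (kochGraph g).dist x y =
      (g + 2) * 4 ^ g + 2 * (kochLabel g x).tail.length * 4 ^ g -
        ((kochLabel g x).tail.map (fun i => 2 * 4 ^ (g - i))).sum := by
  have hsum := (Koch.distSum_cornerDistSum_closed_form g x).1
  have hweight :
      ((kochLabel g x).tail.map fun i => 2 * 4 ^ (g - i)).sum = 2 * Koch.labelWeight g x := by
    rw [Koch.labelWeight, ← List.sum_map_mul_left]
  simp only [Koch.kochGraph_dist]
  rw [hweight, ← add_mul, ← hsum]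
  exact (Nat.add_sub_cancel _ _).symm
end
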